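/- arXiv:1805.01666 — 4 statements merged into one kernel-verified Lean document; each statement's English description precedes it below -/
import Mathlib

section
/- Let (L, q_L) be a quadratic 𝔬-lattice of rank n, let k ≥ n, and let L' be a lattice in V equipped with the quadratic form q_{L'} obtained by restricting q_L ⊗ F. Then q_{L'}(L') ⊆ 𝔬 if and only if there exists a primitive isometry from (L', q_{L'}) to (H_k, q_k). -/
namespace GKPaper

open scoped BigOperators

section Core

variable {𝔬 : Type*} [CommRing 𝔬]

/-- The hyperbolic plane over a commutative ring `R`: the quadratic form
`(x, y) ↦ x * y` on `R × R`, whose Gram matrix is `[[0, 1/2], [1/2, 0]]`. -/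
noncomputable def hypPlane (R : Type*) [CommRing R] : QuadraticForm R (R × R) :=
  QuadraticMap.linMulLin (LinearMap.fst R R R) (LinearMap.snd R R R)

/-- The hyperbolic quadratic lattice `H_k` of rank `2k` over `R`, the orthogonal
sum of `k` copies of the hyperbolic plane. -/
noncomputable def Hyp (R : Type*) [CommRing R] (k : ℕ) : QuadraticForm R (Fin k → R × R) :=
  QuadraticMap.pi fun _ : Fin k => hypPlane R

/-- The matrix of the polar (bilinear) form of `Q` in the standard basis. -/
noncomputable def gramPolar {n : ℕ} (Q : QuadraticForm 𝔬 (Fin n → 𝔬)) :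
    Matrix (Fin n) (Fin n) 𝔬 :=
  Matrix.of fun i j => QuadraticMap.polar Q (Pi.single i 1) (Pi.single j 1)

/-- `(L, q_L)` is a quadratic lattice: the extension of `q_L` to `V = L ⊗ F` is
nondegenerate, i.e. the (half-integral) Gram matrix has nonzero determinant;
equivalently (in residue characteristic zero) the polar matrix has nonzero
determinant. -/
def IsQuadLattice {n : ℕ} (Q : QuadraticForm 𝔬 (Fin n → 𝔬)) : Prop :=
  (gramPolar Q).det ≠ 0

/-- The base change of the integral quadratic form `Q` on `𝔬^n` to an `𝔬`-algebra `R`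
(written out via the Gram data of `Q` in the standard basis). -/
noncomputable def bc {n : ℕ} (Q : QuadraticForm 𝔬 (Fin n → 𝔬)) (R : Type*) [CommRing R]
    [Algebra 𝔬 R] : (Fin n → R) → R := fun x =>
  (∑ i, algebraMap 𝔬 R (Q (Pi.single i 1)) * x i ^ 2) +
    ∑ i, ∑ j ∈ Finset.Ioi i,
      algebraMap 𝔬 R (QuadraticMap.polar Q (Pi.single i 1) (Pi.single j 1)) * (x i * x j)

/-- `S(B)` for the Gram matrix `B` of `Q` with respect to the basis `v`:
non-decreasing sequences `(a_1, …, a_n)` of non-negative integers with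
`ord (b_ii) ≥ a_i` and `ord (2 b_ij) ≥ (a_i + a_j) / 2`, the latter expressed
as `π ^ (a_i + a_j) ∣ (2 b_ij) ^ 2`. -/
def SWith (π : 𝔬) {n : ℕ} (Q : QuadraticForm 𝔬 (Fin n → 𝔬)) (v : Fin n → Fin n → 𝔬) :
    Set (Fin n → ℕ) :=
  {a | Monotone a ∧ (∀ i, π ^ a i ∣ Q (v i)) ∧
    ∀ i j, π ^ (a i + a j) ∣ QuadraticMap.polar Q (v i) (v j) ^ 2}

/-- `𝐒({B}) = ⋃_{U ∈ GL_n(𝔬)} S(ᵗU B U)`: the union of `S` over all bases of the lattice. -/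
def GKSet (π : 𝔬) {n : ℕ} (Q : QuadraticForm 𝔬 (Fin n → 𝔬)) : Set (Fin n → ℕ) :=
  {a | ∃ b : Module.Basis (Fin n) 𝔬 (Fin n → 𝔬), a ∈ SWith π Q fun i => b i}

-- The Gross–Keating invariant `GK(B)`: the greatest element of `𝐒({B})` with
-- respect to the lexicographic order (it exists; junk value otherwise).
open Classical in
noncomputable def GKinv (π : 𝔬) {n : ℕ} (Q : QuadraticForm 𝔬 (Fin n → 𝔬)) : Fin n → ℕ :=
  if h : ∃ a ∈ GKSet π Q, ∀ c ∈ GKSet π Q, toLex c ≤ toLex a then h.choose else fun _ => 0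

/-- `Q` is optimal (with respect to the standard basis): `GK(B) ∈ S(B)`. -/
def IsOptimal (π : 𝔬) {n : ℕ} (Q : QuadraticForm 𝔬 (Fin n → 𝔬)) : Prop :=
  GKinv π Q ∈ SWith π Q fun i => Pi.single i 1

end Core

section Lattices

variable {𝔬 : Type*} [CommRing 𝔬] (F : Type*) [Field F] [Algebra 𝔬 F]

variable (𝔬) in
/-- The standard lattice `L = 𝔬^n` sitting inside `V = F^n`. -/
def stdLat (n : ℕ) : Submodule 𝔬 (Fin n → F) :=
  Submodule.span 𝔬 (Set.range fun i : Fin n => (Pi.single i 1 : Fin n → F))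

/-- A lattice in `V = F^n`: a finitely generated `𝔬`-submodule of full rank. -/
def IsLattice {n : ℕ} (L : Submodule 𝔬 (Fin n → F)) : Prop :=
  L.FG ∧ Submodule.span F (L : Set (Fin n → F)) = ⊤

/-- The restriction `q_{L'}` of `q_L ⊗ F` to `L'` takes values in `𝔬`. -/
def IsIntegral {n : ℕ} (Q : QuadraticForm 𝔬 (Fin n → 𝔬)) (L : Submodule 𝔬 (Fin n → F)) :
    Prop :=
  ∀ x ∈ L, bc Q F x ∈ Set.range (algebraMap 𝔬 F)

/-- The submodule `π^N • M` of an `𝔬`-module `M`. -/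
def redSub (π : 𝔬) (N : ℕ) (M : Type*) [AddCommGroup M] [Module 𝔬 M] : Submodule 𝔬 M :=
  Ideal.span {π ^ N} • (⊤ : Submodule 𝔬 M)

/-- `O(L', H_k)(𝔬/π^N)`: linear maps `L'/π^N L' → H_k/π^N H_k` preserving the
induced quadratic forms (stated via arbitrary lifts). -/
def OSet (π : 𝔬) {n : ℕ} (Q : QuadraticForm 𝔬 (Fin n → 𝔬)) (L : Submodule 𝔬 (Fin n → F))
    (k N : ℕ) :
    Set ((↥L ⧸ redSub π N ↥L) →ₗ[𝔬]
      ((Fin k → 𝔬 × 𝔬) ⧸ redSub π N (Fin k → 𝔬 × 𝔬))) :=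
  {φ | ∀ (x : L) (y : Fin k → 𝔬 × 𝔬),
    φ (Submodule.Quotient.mk x) = Submodule.Quotient.mk y →
    ∃ c ∈ Ideal.span {π ^ N},
      algebraMap 𝔬 F (Hyp 𝔬 k y) - bc Q F (x : Fin n → F) = algebraMap 𝔬 F c}

/-- `O^prim(L', H_k)(𝔬/π^N)`: as above, with the additional requirement that the
reduction modulo `π` is injective. -/
def OPrimSet (π : 𝔬) {n : ℕ} (Q : QuadraticForm 𝔬 (Fin n → 𝔬)) (L : Submodule 𝔬 (Fin n → F))
    (k N : ℕ) :
    Set ((↥L ⧸ redSub π N ↥L) →ₗ[𝔬]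
      ((Fin k → 𝔬 × 𝔬) ⧸ redSub π N (Fin k → 𝔬 × 𝔬))) :=
  {φ | φ ∈ OSet F π Q L k N ∧ ∀ x : L,
    (∃ y ∈ redSub π 1 (Fin k → 𝔬 × 𝔬),
      φ (Submodule.Quotient.mk x) = Submodule.Quotient.mk y) →
    x ∈ redSub π 1 ↥L}

-- The stable value of an eventually constant sequence (junk value `0` otherwise).
open Classical in
noncomputable def evVal (s : ℕ → ℚ) : ℚ :=
  if h : ∃ c : ℚ, ∀ᶠ N in Filter.atTop, s N = c then h.choose else 0

/-- The local density `α(L', H_k)` of a lattice `L'` of rank `r`: the stable value of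
`N ↦ f^{-N·D} · #O(L', H_k)(𝔬/π^N)` where `D = 2kr - r(r+1)/2`. -/
noncomputable def density (f : ℕ) (π : 𝔬) {n : ℕ} (Q : QuadraticForm 𝔬 (Fin n → 𝔬))
    (L : Submodule 𝔬 (Fin n → F)) (r k : ℕ) : ℚ :=
  evVal fun N => (Nat.card (OSet F π Q L k N) : ℚ) / (f : ℚ) ^ (N * (2 * k * r - r * (r + 1) / 2))

/-- The primitive local density `α^prim(L', H_k)`. -/
noncomputable def primDensity (f : ℕ) (π : 𝔬) {n : ℕ} (Q : QuadraticForm 𝔬 (Fin n → 𝔬))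
    (L : Submodule 𝔬 (Fin n → F)) (r k : ℕ) : ℚ :=
  evVal fun N =>
    (Nat.card (OPrimSet F π Q L k N) : ℚ) / (f : ℚ) ^ (N * (2 * k * r - r * (r + 1) / 2))

end Lattices


section Comb

/-- `σ` is an `ā`-admissible involution (Ikeda–Katsurada, Definition 3.1). The
blocks `I_s` are realized as the fibers of the non-decreasing sequence `a`. -/
noncomputable def Admissible {n : ℕ} (a : Fin n → ℕ) (σ : Equiv.Perm (Fin n)) : Prop :=
  σ * σ = 1 ∧
  -- (1)
  (Finset.univ.filter fun i => σ i = i).card ≤ 2 ∧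
  (∀ i ∈ Finset.univ.filter fun i' : Fin n => σ i' = i',
    ∀ j ∈ Finset.univ.filter fun j' : Fin n => σ j' = j', i ≠ j →
      a i % 2 ≠ a j % 2 ∧
      a i = sSup {m | ∃ l, (σ l = l ∨ a (σ l) < a l) ∧ a l % 2 = a i % 2 ∧ a l = m}) ∧
  -- (2)
  (∀ i₀ : Fin n,
    (Finset.univ.filter fun i => a i = a i₀ ∧ a (σ i) < a i).card ≤ 1 ∧
    (Finset.univ.filter fun i => a i = a i₀ ∧ (a i < a (σ i) ∨ σ i = i)).card ≤ 1) ∧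
  -- (3)
  (∀ i, a i < a (σ i) →
    a (σ i) = sInf {m | ∃ l, a (σ l) < a l ∧ a i < a l ∧ a l % 2 = a i % 2 ∧ a l = m}) ∧
  (∀ i, a (σ i) < a i →
    a (σ i) = sSup {m | ∃ l, a l < a (σ l) ∧ a l < a i ∧ a l % 2 = a i % 2 ∧ a l = m})

end Comb

section Red

variable {𝔬 : Type*} [CommRing 𝔬]

/-- The `𝔬`-linear map `𝔬² → 𝔬^n` sending `(s, t)` to `s • e_i + t • e_j`. -/
noncomputable def pairMap {n : ℕ} (i j : Fin n) : (Fin 2 → 𝔬) →ₗ[𝔬] (Fin n → 𝔬) :=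
  ((LinearMap.proj 0 : (Fin 2 → 𝔬) →ₗ[𝔬] 𝔬).smulRight (Pi.single i 1)) +
    ((LinearMap.proj 1 : (Fin 2 → 𝔬) →ₗ[𝔬] 𝔬).smulRight (Pi.single j 1))

/-- `Q` (with respect to the standard basis) is a reduced form of GK-type `(a, σ)`
(Ikeda–Katsurada, Definition 3.2). -/
noncomputable def IsReducedOf (π : 𝔬) {n : ℕ} (Q : QuadraticForm 𝔬 (Fin n → 𝔬))
    (a : Fin n → ℕ) (σ : Equiv.Perm (Fin n)) : Prop :=
  Admissible a σ ∧ (a ∈ SWith π Q fun i => Pi.single i 1) ∧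
  -- (i)
  (∀ i, σ i ≠ i → a i ≤ a (σ i) →
    GKinv π (Q.comp (pairMap i (σ i))) = ![a i, a (σ i)]) ∧
  -- (ii)
  (∀ i, σ i = i →
    π ^ a i ∣ Q (Pi.single i 1) ∧ ¬ π ^ (a i + 1) ∣ Q (Pi.single i 1)) ∧
  -- (iii)
  (∀ i j, j ≠ i → j ≠ σ i →
    π ^ (a i + a j + 1) ∣ QuadraticMap.polar Q (Pi.single i 1) (Pi.single j 1) ^ 2)

/-- The standard basis is a reduced basis for `Q`. -/
noncomputable def IsReducedStd (π : 𝔬) {n : ℕ} (Q : QuadraticForm 𝔬 (Fin n → 𝔬)) : Prop :=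
  ∃ σ : Equiv.Perm (Fin n), IsReducedOf π Q (GKinv π Q) σ

end Red

section Abs

variable {𝔬 : Type*} [CommRing 𝔬] (F : Type*) [Field F] [Algebra 𝔬 F]

/-- `S` conditions for an abstract lattice `L ⊆ F^n` with respect to a family `v` of
elements of `L` (a basis), using the ambient form `q_L ⊗ F`. -/
def SAbs (π : 𝔬) {n : ℕ} (Q : QuadraticForm 𝔬 (Fin n → 𝔬)) (L : Submodule 𝔬 (Fin n → F))
    {m : ℕ} (v : Fin m → L) : Set (Fin m → ℕ) :=
  {a | Monotone a ∧
    (∀ i, ∃ c : 𝔬, bc Q F ((v i : Fin n → F)) = algebraMap 𝔬 F (π ^ a i * c)) ∧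
    ∀ i j, ∃ c : 𝔬,
      QuadraticMap.polar (bc Q F) (v i : Fin n → F) (v j : Fin n → F) ^ 2 =
        algebraMap 𝔬 F (π ^ (a i + a j) * c)}

/-- `𝐒({B})` for an abstract lattice `L ⊆ F^n` of rank `m`. -/
def GKSetAbs (π : 𝔬) {n : ℕ} (Q : QuadraticForm 𝔬 (Fin n → 𝔬))
    (L : Submodule 𝔬 (Fin n → F)) (m : ℕ) : Set (Fin m → ℕ) :=
  {a | ∃ b : Module.Basis (Fin m) 𝔬 L, a ∈ SAbs F π Q L fun i => b i}

open Classical in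
/-- The Gross–Keating invariant of an abstract lattice `L ⊆ F^n` of rank `m`. -/
noncomputable def GKAbs (π : 𝔬) {n : ℕ} (Q : QuadraticForm 𝔬 (Fin n → 𝔬))
    (L : Submodule 𝔬 (Fin n → F)) (m : ℕ) : Fin m → ℕ :=
  if h : ∃ a ∈ GKSetAbs F π Q L m, ∀ c ∈ GKSetAbs F π Q L m, toLex c ≤ toLex a then
    h.choose else fun _ => 0

/-- Membership in the radical of `L' ⊗ κ`, via arbitrary lifts: `v` lies in the
radical iff `q̄(v) = 0` and `v` pairs to zero with everything under the polar form. -/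
def inRad (π : 𝔬) {n : ℕ} (Q : QuadraticForm 𝔬 (Fin n → 𝔬)) (L : Submodule 𝔬 (Fin n → F))
    (v : ↥L ⧸ redSub π 1 ↥L) : Prop :=
  ∀ x : L, Submodule.Quotient.mk x = v →
    (∃ c : 𝔬, bc Q F (x : Fin n → F) = algebraMap 𝔬 F (π * c)) ∧
    ∀ y : L, ∃ c : 𝔬,
      QuadraticMap.polar (bc Q F) (x : Fin n → F) (y : Fin n → F) = algebraMap 𝔬 F (π * c)

/-- The cardinality of the radical of `L' ⊗ κ`; the dimension `a(L')` of the
nonsingular part is determined by `#Rad = f ^ (n - a(L'))`. -/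
noncomputable def radCard (π : 𝔬) {n : ℕ} (Q : QuadraticForm 𝔬 (Fin n → 𝔬))
    (L : Submodule 𝔬 (Fin n → F)) : ℕ :=
  Nat.card {v : ↥L ⧸ redSub π 1 ↥L // inRad F π Q L v}

/-- The nonsingular part `L̄'₀` of `L' ⊗ κ` (of even dimension `a`) is split
(isometric to a hyperbolic space over `κ`): equivalently, `L' ⊗ κ` contains a
totally singular subspace of dimension `a/2 + (n - a)`. -/
def SplitCond (f : ℕ) (π : 𝔬) {n : ℕ} (Q : QuadraticForm 𝔬 (Fin n → 𝔬))
    (L : Submodule 𝔬 (Fin n → F)) (a : ℕ) : Prop :=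
  ∃ W : Submodule 𝔬 (↥L ⧸ redSub π 1 ↥L),
    (∀ v ∈ W, ∀ x : L, Submodule.Quotient.mk x = v →
      ∃ c : 𝔬, bc Q F (x : Fin n → F) = algebraMap 𝔬 F (π * c)) ∧
    Nat.card W = f ^ (a / 2 + (n - a))

/-- The index `[L' : L]` measured by cardinality: `#(L'/L) = f ^ [L' : L]`. -/
noncomputable def quotCard {n : ℕ} (L L' : Submodule 𝔬 (Fin n → F)) : ℕ :=
  Nat.card (↥L' ⧸ Submodule.comap L'.subtype L)

end Abs

end GKPaper

namespace GKPaper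

/-! A quadratic form `q` on a free module with basis `b` can be written `q x = B x x` for a
(non-symmetric) bilinear form `B`. Then `x ↦ (xᵢ, B (bᵢ) x)ᵢ` is an isometry into the hyperbolic
lattice, since `∑ xᵢ B (bᵢ) x = B x x`, and its first coordinates are the coordinates of `x`, so it
is injective and primitive. Integrality of `q_{L'}` is exactly what makes it an `𝔬`-valued form on
the free `𝔬`-module `L'`; the converse direction is immediate. -/

section Hyperbolic

variable {R M : Type*} [CommRing R] [AddCommGroup M] [Module R M]

theorem Hyp_apply {k : ℕ} (y : Fin k → R × R) : Hyp R k y = ∑ j, (y j).1 * (y j).2 := by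
  simp [Hyp, hypPlane, QuadraticMap.pi_apply]

theorem _root_.LinearMap.apply_mem_of_mem_smul_top (f : M →ₗ[R] R) {I : Ideal R} {x : M}
    (hx : x ∈ I • (⊤ : Submodule R M)) : f x ∈ I := by
  simpa using Submodule.smul_top_le_comap_smul_top I f hx

theorem _root_.Module.Basis.mem_smul_top_iff {ι : Type*} [Fintype ι] (b : Module.Basis ι R M)
    (I : Ideal R) {x : M} : x ∈ I • (⊤ : Submodule R M) ↔ ∀ i, b.repr x i ∈ I := by
  refine ⟨fun hx i => (b.coord i).apply_mem_of_mem_smul_top hx, fun h => ?_⟩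
  rw [← b.sum_repr x]
  exact Submodule.sum_mem _ fun i _ => Submodule.smul_mem_smul (h i) Submodule.mem_top

variable {ι : Type*} {k : ℕ}

noncomputable def hypEmbedding (b : Module.Basis ι R M) (e : ι → Fin k)
    (B : LinearMap.BilinForm R M) : M →ₗ[R] (Fin k → R × R) :=
  LinearMap.pi (Function.extend e (fun i => (b.coord i).prod (B (b i))) 0)

variable (b : Module.Basis ι R M) {e : ι → Fin k} (B : LinearMap.BilinForm R M)

theorem hypEmbedding_apply_apply (he : Function.Injective e) (x : M) (i : ι) :
    hypEmbedding b e B x (e i) = (b.repr x i, B (b i) x) := by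
  simp [hypEmbedding, he.extend_apply]

theorem hypEmbedding_apply_of_notMem_range (x : M) {j : Fin k} (hj : j ∉ Set.range e) :
    hypEmbedding b e B x j = 0 := by
  simp [hypEmbedding, Function.extend_apply' _ _ _ hj]

theorem Hyp_hypEmbedding [Fintype ι] (he : Function.Injective e) (x : M) :
    Hyp R k (hypEmbedding b e B x) = B x x := by
  calc Hyp R k (hypEmbedding b e B x) = ∑ i, b.repr x i * B (b i) x := by
        rw [Hyp_apply]
        refine (Fintype.sum_of_injective e he _ _ (fun j hj => ?_) fun i => ?_).symm
        · simp [hypEmbedding_apply_of_notMem_range b B x hj]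
        · simp [hypEmbedding_apply_apply b B he]
    _ = B (∑ i, b.repr x i • b i) x := by
        simp only [map_sum, map_smul, LinearMap.sum_apply, LinearMap.smul_apply, smul_eq_mul]
    _ = B x x := by rw [b.sum_repr]

theorem hypEmbedding_injective (he : Function.Injective e) :
    Function.Injective (hypEmbedding b e B) := fun x y h =>
  b.ext_elem fun i => by
    simpa [hypEmbedding_apply_apply b B he] using congr_arg (fun z => (z (e i)).1) h

theorem mem_smul_top_of_hypEmbedding_mem [Fintype ι] (he : Function.Injective e) {I : Ideal R}
    {x : M} (hx : hypEmbedding b e B x ∈ I • (⊤ : Submodule R (Fin k → R × R))) :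
    x ∈ I • (⊤ : Submodule R M) :=
  (b.mem_smul_top_iff I).mpr fun i => by
    simpa [hypEmbedding_apply_apply b B he] using
      ((LinearMap.fst R R R).comp (LinearMap.proj (e i))).apply_mem_of_mem_smul_top hx

end Hyperbolic

theorem exists_primitive_isometry_hyp {R M ι : Type*} [CommRing R] [AddCommGroup M] [Module R M]
    [Fintype ι] {k : ℕ} (b : Module.Basis ι R M) {e : ι → Fin k} (he : Function.Injective e)
    (q : QuadraticForm R M) :
    ∃ φ : M →ₗ[R] (Fin k → R × R), Function.Injective φ ∧ (∀ x, Hyp R k (φ x) = q x) ∧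
      ∀ (I : Ideal R) (x : M),
        φ x ∈ I • (⊤ : Submodule R (Fin k → R × R)) → x ∈ I • (⊤ : Submodule R M) := by
  have := Module.Free.of_basis b
  obtain ⟨B, rfl⟩ := LinearMap.BilinMap.toQuadraticMap_surjective q
  exact ⟨hypEmbedding b e B, hypEmbedding_injective b B he, Hyp_hypEmbedding b B he,
    fun _ _ => mem_smul_top_of_hypEmbedding_mem b B he⟩

theorem _root_.QuadraticMap.exists_algebraMap_comp_eq {R A M : Type*} [CommRing R] [CommRing A]
    [Algebra R A] [AddCommGroup M] [Module R M] (hinj : Function.Injective (algebraMap R A))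
    (q : QuadraticMap R M A) (hq : ∀ x, q x ∈ Set.range (algebraMap R A)) :
    ∃ q' : QuadraticForm R M, ∀ x, algebraMap R A (q' x) = q x := by
  choose g hg using hq
  have hpolar : ∀ x y, algebraMap R A (QuadraticMap.polar g x y) = QuadraticMap.polar q x y :=
    fun x y => by
      rw [← QuadraticMap.polar_comp]
      exact congrArg (fun f => QuadraticMap.polar f x y) (funext hg)
  refine ⟨QuadraticMap.ofPolar g (fun a x => hinj ?_) (fun x x' y => hinj ?_)
    (fun a x y => hinj ?_), hg⟩
  · simp [hg, QuadraticMap.map_smul, Algebra.smul_def]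
  · simp [hpolar, QuadraticMap.polar_add_left]
  · simp [hpolar, QuadraticMap.polar_smul_left, Algebra.smul_def]

section BaseChange

variable {𝔬 : Type*} [CommRing 𝔬] (F : Type*) [Field F] [Algebra 𝔬 F] {n : ℕ}

noncomputable def bcForm (Q : QuadraticForm 𝔬 (Fin n → 𝔬)) : QuadraticForm F (Fin n → F) :=
  (∑ i, algebraMap 𝔬 F (Q (Pi.single i 1)) •
      QuadraticMap.linMulLin (LinearMap.proj i) (LinearMap.proj i)) +
  ∑ i, ∑ j ∈ Finset.Ioi i,
    algebraMap 𝔬 F (QuadraticMap.polar Q (Pi.single i 1) (Pi.single j 1)) •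
      QuadraticMap.linMulLin (LinearMap.proj i) (LinearMap.proj j)

theorem bcForm_apply (Q : QuadraticForm 𝔬 (Fin n → 𝔬)) (x : Fin n → F) :
    bcForm F Q x = bc Q F x := by
  simp only [bc, bcForm, add_apply, sum_apply, smul_apply, QuadraticMap.linMulLin_apply,
    LinearMap.proj_apply, smul_eq_mul, sq]

end BaseChange

section S1

variable {𝔬 : Type*} [CommRing 𝔬] [IsDomain 𝔬] [IsDiscreteValuationRing 𝔬]
  [CharZero 𝔬] [Finite (IsLocalRing.ResidueField 𝔬)]
  [IsAdicComplete (IsLocalRing.maximalIdeal 𝔬) 𝔬]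
  {F : Type*} [Field F] [Algebra 𝔬 F] [IsFractionRing 𝔬 F]

theorem statement_1_general (π : 𝔬) {n k : ℕ} (hnk : n ≤ k)
    (Q : QuadraticForm 𝔬 (Fin n → 𝔬))
    (L' : Submodule 𝔬 (Fin n → F)) (hL' : IsLattice F L') :
    IsIntegral F Q L' ↔
      ∃ φ : ↥L' →ₗ[𝔬] (Fin k → 𝔬 × 𝔬),
        Function.Injective φ ∧
        (∀ x : L', algebraMap 𝔬 F (Hyp 𝔬 k (φ x)) = bc Q F (x : Fin n → F)) ∧
        (∀ x : L', φ x ∈ redSub π 1 (Fin k → 𝔬 × 𝔬) → x ∈ redSub π 1 ↥L') := by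
  constructor
  · intro hInt
    have : Submodule.IsLattice F L' := ⟨hL'.1, hL'.2⟩
    let b := Module.finBasisOfFinrankEq 𝔬 L'
      ((Submodule.IsLattice.finrank_of_pi F L').trans (Fintype.card_fin n))
    obtain ⟨q, hq⟩ := QuadraticMap.exists_algebraMap_comp_eq (IsFractionRing.injective 𝔬 F)
      (((bcForm F Q).restrictScalars (S := 𝔬)).comp L'.subtype)
      fun x => by simpa [bcForm_apply] using hInt x x.2
    obtain ⟨φ, hinj, hiso, hprim⟩ := exists_primitive_isometry_hyp b (Fin.castLE_injective hnk) q
    refine ⟨φ, hinj, fun x => ?_, hprim _⟩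
    simp [hiso, hq, bcForm_apply]
  · rintro ⟨φ, -, hφ, -⟩ x hx
    exact ⟨_, hφ ⟨x, hx⟩⟩

/-- for a lattice `L'` in `V` with the restricted form `q_{L'}`,
one has `q_{L'}(L') ⊆ 𝔬` iff there exists a primitive isometry `L' → H_k`. -/
theorem statement_1 (π : 𝔬) (hπ : Irreducible π) {n k : ℕ} (hnk : n ≤ k)
    (Q : QuadraticForm 𝔬 (Fin n → 𝔬)) (hQ : IsQuadLattice Q)
    (L' : Submodule 𝔬 (Fin n → F)) (hL' : IsLattice F L') :
    IsIntegral F Q L' ↔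
      ∃ φ : ↥L' →ₗ[𝔬] (Fin k → 𝔬 × 𝔬),
        Function.Injective φ ∧
        (∀ x : L', algebraMap 𝔬 F (Hyp 𝔬 k (φ x)) = bc Q F (x : Fin n → F)) ∧
        (∀ x : L', φ x ∈ redSub π 1 (Fin k → 𝔬 × 𝔬) → x ∈ redSub π 1 ↥L') :=
  statement_1_general π hnk Q L' hL'

end S1
end GKPaper
end

section
/- Let (L', q_{L'}) be a quadratic 𝔬-lattice of rank n (so q_{L'}(L') ⊆ 𝔬). Then a(L') = dim_κ (L'⊗κ)/Rad(L'⊗κ) equals the number of zero entries of GK(L'). -/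
namespace GKPaper

section S6

variable {𝔬 : Type*} [CommRing 𝔬] [IsDomain 𝔬] [IsDiscreteValuationRing 𝔬]
  [CharZero 𝔬] [Finite (IsLocalRing.ResidueField 𝔬)]
  [IsAdicComplete (IsLocalRing.maximalIdeal 𝔬) 𝔬]
  {F : Type*} [Field F] [Algebra 𝔬 F] [IsFractionRing 𝔬 F]

/-- Membership in the radical of `L' ⊗ κ` for a coordinate quadratic lattice
`L' = 𝔬^n`, via arbitrary lifts: `q̄(v) = 0` and `v` pairs to zero with
everything under the reduced polar form. -/
def inRadC (π : 𝔬) {n : ℕ} (Q : QuadraticForm 𝔬 (Fin n → 𝔬))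
    (v : (Fin n → 𝔬) ⧸ redSub π 1 (Fin n → 𝔬)) : Prop :=
  ∀ x : Fin n → 𝔬, Submodule.Quotient.mk x = v →
    π ∣ Q x ∧ ∀ y : Fin n → 𝔬, π ∣ QuadraticMap.polar Q x y

/-!
Let `M ⊇ π L'` be the preimage of `Rad(L' ⊗ κ)` in `L'`, and let `b` be a basis realising
`g = GK(L')`; the greatest element exists because `π ^ (∑ a_i)` divides the determinant of the
Gram matrix for every `a ∈ 𝐒`. A basis vector `b_i` with `g_i ≥ 1` lies in `M`. Conversely, if
some `x ∈ M` had a unit `b`-coordinate at an index with `g_i = 0`, exchanging that basis vector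
for `x` and moving `x` to the last zero position of `g` yields a basis in which `(0,…,0,1,…,1)`,
with one zero fewer than `g`, lies in `𝐒`, contradicting the maximality of `g`. So `M` consists
of the vectors whose `b`-coordinates at the zero entries of `g` are divisible by `π`, and
reducing `b`-coordinates modulo `π` identifies `Rad(L' ⊗ κ)` with the vectors of `κⁿ` vanishing
at those entries.
-/

theorem card_subtype_forall_imp_eq_zero {ι K : Type*} [Fintype ι] [Zero K] (p : ι → Prop)
    [DecidablePred p] :
    Nat.card {c : ι → K // ∀ i, p i → c i = 0} =
      Nat.card K ^ (Fintype.card ι - (Finset.univ.filter p).card) := by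
  let e : {c : ι → K // ∀ i, p i → c i = 0} ≃ ({i // ¬p i} → K) :=
    { toFun := fun c i => c.1 i
      invFun := fun d => ⟨fun i => if h : p i then 0 else d ⟨i, h⟩, fun i hi => dif_pos hi⟩
      left_inv := fun c => Subtype.ext <| funext fun i => by by_cases h : p i <;> simp [h, c.2 i]
      right_inv := fun d => funext fun i => dif_neg i.2 }
  rw [Nat.card_congr e, Nat.card_pi, Finset.prod_const, Finset.card_univ,
    Fintype.card_subtype_compl, Fintype.card_subtype]

section General

open QuadraticMap Module

variable {R : Type*} [CommRing R] {M : Type*} [AddCommGroup M] [Module R M]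

def radicalPreimage (π : R) (Q : QuadraticForm R M) : Submodule R M where
  carrier := {x | π ∣ Q x ∧ ∀ y, π ∣ polar Q x y}
  zero_mem' := ⟨by simp, fun y => by simp⟩
  add_mem' := by
    rintro x x' ⟨hx, hxy⟩ ⟨hx', hx'y⟩
    refine ⟨?_, fun y => ?_⟩
    · rw [← sub_add_cancel (Q (x + x')) (Q x + Q x')]
      exact dvd_add (by simpa [polar, sub_sub] using hxy x') (dvd_add hx hx')
    · rw [polar_add_left]
      exact dvd_add (hxy y) (hx'y y)
  smul_mem' := by
    rintro c x ⟨hx, hxy⟩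
    refine ⟨?_, fun y => ?_⟩
    · rw [QuadraticMap.map_smul]
      exact hx.mul_left _
    · rw [polar_smul_left]
      exact (hxy y).mul_left _

variable {π : R} {Q : QuadraticForm R M}

theorem mem_redSub_one_iff {x : M} : x ∈ redSub π 1 M ↔ ∃ y, π • y = x := by
  simp [redSub, Submodule.ideal_span_singleton_smul, Submodule.mem_smul_pointwise_iff_exists]

theorem smul_mem_radicalPreimage (y : M) : π • y ∈ radicalPreimage π Q := by
  refine ⟨?_, fun z => ?_⟩
  · rw [QuadraticMap.map_smul, smul_eq_mul, mul_assoc]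
    exact dvd_mul_right _ _
  · rw [polar_smul_left, smul_eq_mul]
    exact dvd_mul_right _ _

theorem inRadC_mk_iff {n : ℕ} {Q : QuadraticForm R (Fin n → R)} {x : Fin n → R} :
    inRadC π Q (Submodule.Quotient.mk x) ↔ x ∈ radicalPreimage π Q := by
  refine ⟨fun h => h x rfl, fun hx x' hx' => ?_⟩
  obtain ⟨y, hy⟩ := mem_redSub_one_iff.mp ((Submodule.Quotient.eq _).mp hx')
  rw [sub_eq_iff_eq_add.mp hy.symm]
  exact add_mem (smul_mem_radicalPreimage y) hx

theorem mem_radicalPreimage_of_basis {ι : Type*} (b : Basis ι R M) {x : M} (hx : π ∣ Q x)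
    (hxb : ∀ i, π ∣ polar Q x (b i)) : x ∈ radicalPreimage π Q := by
  refine ⟨hx, fun y => ?_⟩
  rw [← polarBilin_apply_apply, ← b.linearCombination_repr y, Finsupp.linearCombination_apply,
    _root_.map_finsuppSum]
  exact Finset.dvd_sum fun i _ => by simpa using (hxb i).mul_left (b.repr y i)

theorem mem_redSub_one_iff_dvd_repr {ι : Type*} [Fintype ι] (b : Basis ι R M) {x : M} :
    x ∈ redSub π 1 M ↔ ∀ i, π ∣ b.repr x i := by
  rw [mem_redSub_one_iff]
  constructor
  · rintro ⟨y, rfl⟩ i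
    simp
  · intro h
    choose c hc using h
    refine ⟨∑ i, c i • b i, ?_⟩
    conv_rhs => rw [← b.sum_repr x]
    simp [Finset.smul_sum, smul_smul, hc]

theorem exists_basis_eq_update {ι : Type*} [Fintype ι] [DecidableEq ι] (b : Basis ι R M)
    {x : M} {j : ι} (hx : IsUnit (b.repr x j)) : ∃ B : Basis ι R M, ⇑B = Function.update b j x := by
  have hdet : IsUnit (b.det (Function.update b j x)) := by
    rwa [b.det_apply, b.toMatrix_update, b.toMatrix_self, ← Matrix.cramer_apply,
      Matrix.cramer_one]
  obtain ⟨hli, hspan⟩ := b.is_basis_iff_det.mpr hdet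
  exact ⟨Basis.mk hli hspan.ge, Basis.coe_mk _ _⟩

end General

section GrossKeating

open QuadraticMap Module

variable {R : Type*} [CommRing R] {π : R} {n : ℕ} {Q : QuadraticForm R (Fin n → R)}

theorem zero_mem_GKSet : 0 ∈ GKSet π Q :=
  ⟨Pi.basisFun R (Fin n), monotone_const, fun i => by simp, fun i j => by simp⟩

theorem step_mem_SWith {v : Fin n → Fin n → R} {j : Fin n}
    (hv : ∀ i, j ≤ i → v i ∈ radicalPreimage π Q) :
    (fun i => if j ≤ i then 1 else 0) ∈ SWith π Q v := by
  have hsq : ∀ {i i' : Fin n} {c : R}, π ∣ c →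
      π ^ ((if j ≤ i then 1 else 0) + if j ≤ i' then 1 else 0) ∣ c ^ 2 := fun {i i' _} hc =>
    (pow_dvd_pow π (by split_ifs <;> omega)).trans (pow_dvd_pow_of_dvd hc 2)
  refine ⟨fun i i' h => ?_, fun i => ?_, fun i i' => ?_⟩
  · dsimp only
    split_ifs <;> omega
  · dsimp only
    split_ifs with hi
    · simpa using (hv i hi).1
    · simp
  · by_cases hi : j ≤ i
    · exact hsq ((hv i hi).2 (v i'))
    · by_cases hi' : j ≤ i'
      · rw [polar_comm]
        exact hsq ((hv i' hi').2 (v i))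
      · simp [hi, hi']

theorem toLex_lt_step {g : Fin n → ℕ} {j : Fin n} (hg : ∀ i, g i = 0 ↔ i ≤ j) :
    toLex g < toLex (fun i => if j ≤ i then 1 else 0) := by
  refine ⟨j, fun i hi => ?_, ?_⟩
  · simp [(hg i).mpr hi.le, not_le.mpr hi]
  · simp [(hg j).mpr le_rfl]

theorem basis_mem_radicalPreimage {g : Fin n → ℕ} {b : Basis (Fin n) R (Fin n → R)} (hπ : Prime π)
    (hg : g ∈ SWith π Q fun i => b i) {i : Fin n} (hi : g i ≠ 0) : b i ∈ radicalPreimage π Q :=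
  mem_radicalPreimage_of_basis b ((dvd_pow_self π hi).trans (hg.2.1 i))
    fun k => hπ.dvd_of_dvd_pow ((dvd_pow_self π (by omega)).trans (hg.2.2 i k))

section IntegrallyClosed

variable [IsDomain R] [IsIntegrallyClosed R]

theorem pow_sum_dvd_det_of_pow_dvd_sq {ι : Type*} [Fintype ι] [DecidableEq ι]
    {P : Matrix ι ι R} {a : ι → ℕ} (h : ∀ i j, π ^ (a i + a j) ∣ P i j ^ 2) :
    π ^ ∑ i, a i ∣ P.det := by
  rw [Matrix.det_apply]
  refine Finset.dvd_sum fun σ _ => ?_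
  have hprod : π ^ ∑ i, a i ∣ ∏ i, P (σ i) i := by
    rw [← IsIntegrallyClosed.pow_dvd_pow_iff two_ne_zero, ← pow_mul, ← Finset.prod_pow]
    calc π ^ ((∑ i, a i) * 2) = ∏ i, π ^ (a (σ i) + a i) := by
          rw [Finset.prod_pow_eq_pow_sum, Finset.sum_add_distrib, Equiv.sum_comp σ a, mul_two]
      _ ∣ ∏ i, P (σ i) i ^ 2 := Finset.prod_dvd_prod_of_dvd _ _ fun i _ => h (σ i) i
  rw [Units.smul_def, zsmul_eq_mul]
  exact hprod.mul_left _

theorem pow_sum_dvd_det_gramPolar {a : Fin n → ℕ} (ha : a ∈ GKSet π Q) :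
    π ^ ∑ i, a i ∣ (gramPolar Q).det := by
  obtain ⟨b, -, -, hpolar⟩ := ha
  set e := Pi.basisFun R (Fin n)
  have hgram : LinearMap.toMatrix₂ e e (polarBilin Q) = gramPolar Q := by
    ext i j
    simp [e, LinearMap.toMatrix₂_apply, gramPolar]
  have hdet := congrArg Matrix.det (LinearMap.toMatrix₂_mul_basis_toMatrix e e b b (polarBilin Q))
  rw [Matrix.det_mul, Matrix.det_mul, Matrix.det_transpose, hgram, ← e.det_apply] at hdet
  have hP : π ^ ∑ i, a i ∣ (LinearMap.toMatrix₂ b b (polarBilin Q)).det :=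
    pow_sum_dvd_det_of_pow_dvd_sq fun i j => by simpa [LinearMap.toMatrix₂_apply] using hpolar i j
  rwa [← hdet, (e.isUnit_det b).dvd_mul_right, (e.isUnit_det b).dvd_mul_left] at hP

theorem GKSet_finite [WfDvdMonoid R] (hπ : ¬IsUnit π) (hQ : IsQuadLattice Q) :
    (GKSet π Q).Finite := by
  obtain ⟨N, hN⟩ := FiniteMultiplicity.of_not_isUnit hπ hQ
  refine (Set.Finite.pi' fun _ : Fin n => Set.finite_Iic N).subset fun a ha i => Set.mem_Iic.mpr ?_
  by_contra! hi
  exact hN ((pow_dvd_pow π (hi.trans_le (Finset.single_le_sum (by simp) (Finset.mem_univ i)))).trans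
    (pow_sum_dvd_det_gramPolar ha))

theorem GKinv_spec [WfDvdMonoid R] (hπ : ¬IsUnit π) (hQ : IsQuadLattice Q) :
    GKinv π Q ∈ GKSet π Q ∧ ∀ c ∈ GKSet π Q, toLex c ≤ toLex (GKinv π Q) := by
  have h := Set.exists_max_image _ toLex (GKSet_finite hπ hQ) ⟨0, zero_mem_GKSet⟩
  rw [GKinv, dif_pos h]
  exact h.choose_spec

end IntegrallyClosed

end GrossKeating

section DiscreteValuationRing

open QuadraticMap Module IsLocalRing

variable {R : Type*} [CommRing R] [IsDomain R] [IsDiscreteValuationRing R] {π : R}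

theorem residue_eq_zero_iff_dvd (hπ : Irreducible π) {c : R} : residue R c = 0 ↔ π ∣ c := by
  rw [residue_eq_zero_iff, (IsDiscreteValuationRing.irreducible_iff_uniformizer π).mp hπ,
    Ideal.mem_span_singleton]

theorem isUnit_of_not_dvd (hπ : Irreducible π) {c : R} (hc : ¬π ∣ c) : IsUnit c := by
  rwa [← notMem_maximalIdeal, (IsDiscreteValuationRing.irreducible_iff_uniformizer π).mp hπ,
    Ideal.mem_span_singleton]

section Radical

variable {n : ℕ} {Q : QuadraticForm R (Fin n → R)} {g : Fin n → ℕ}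
  {b : Basis (Fin n) R (Fin n → R)}

theorem dvd_repr_of_mem_radicalPreimage (hπ : Irreducible π) (hg : g ∈ SWith π Q fun i => b i)
    (hmax : ∀ c ∈ GKSet π Q, toLex c ≤ toLex g) {x : Fin n → R}
    (hx : x ∈ radicalPreimage π Q) {i₀ : Fin n} (hi₀ : g i₀ = 0) : π ∣ b.repr x i₀ := by
  classical
  by_contra hdvd
  obtain ⟨B, hB⟩ := exists_basis_eq_update b (isUnit_of_not_dvd hπ hdvd)
  have hzeros : ({i | g i = 0} : Finset (Fin n)).Nonempty := ⟨i₀, by simpa using hi₀⟩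
  set j := ({i | g i = 0} : Finset (Fin n)).max' hzeros
  have hgj : g j = 0 := by simpa using Finset.max'_mem _ hzeros
  have hj : ∀ i, g i = 0 ↔ i ≤ j := fun i =>
    ⟨fun h => Finset.le_max' _ _ (by simpa using h), fun h => Nat.eq_zero_of_le_zero (hgj ▸ hg.1 h)⟩
  have hB' : ∀ i, j ≤ i → B.reindex (Equiv.swap i₀ j) i ∈ radicalPreimage π Q := by
    intro i hi
    rw [Basis.reindex_apply, Equiv.symm_swap, hB]
    rcases hi.eq_or_lt with rfl | hlt
    · simpa using hx
    · have hgi : g i ≠ 0 := fun h => hlt.not_ge ((hj i).mp h)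
      have hii₀ : i ≠ i₀ := fun h => hgi (h ▸ hi₀)
      rw [Equiv.swap_apply_of_ne_of_ne hii₀ hlt.ne', Function.update_of_ne hii₀]
      exact basis_mem_radicalPreimage hπ.prime hg hgi
  exact (hmax _ ⟨_, step_mem_SWith hB'⟩).not_gt (toLex_lt_step hj)

theorem mem_radicalPreimage_iff_dvd_repr (hπ : Irreducible π) (hg : g ∈ SWith π Q fun i => b i)
    (hmax : ∀ c ∈ GKSet π Q, toLex c ≤ toLex g) {x : Fin n → R} :
    x ∈ radicalPreimage π Q ↔ ∀ i, g i = 0 → π ∣ b.repr x i := by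
  refine ⟨fun hx i hi => dvd_repr_of_mem_radicalPreimage hπ hg hmax hx hi, fun h => ?_⟩
  rw [← b.sum_repr x]
  refine Submodule.sum_mem _ fun i _ => ?_
  by_cases hi : g i = 0
  · obtain ⟨c, hc⟩ := h i hi
    rw [hc, mul_smul]
    exact smul_mem_radicalPreimage _
  · exact Submodule.smul_mem _ _ (basis_mem_radicalPreimage hπ.prime hg hi)

section ResidueCoordinates

variable {M : Type*} [AddCommGroup M] [Module R M] {ι : Type*} [Fintype ι]

noncomputable def residueCoords (b : Basis ι R M) : M →ₗ[R] ι → ResidueField R :=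
  LinearMap.pi fun i => Algebra.linearMap R (ResidueField R) ∘ₗ b.coord i

theorem ker_residueCoords (hπ : Irreducible π) (b : Basis ι R M) :
    LinearMap.ker (residueCoords b) = redSub π 1 M := by
  ext x
  simp [residueCoords, funext_iff, residue_eq_zero_iff_dvd hπ, mem_redSub_one_iff_dvd_repr b]

theorem residueCoords_surjective (b : Basis ι R M) : Function.Surjective (residueCoords b) := by
  intro c
  choose d hd using fun i => residue_surjective (c i)
  refine ⟨b.equivFun.symm d, funext fun i => ?_⟩
  simp only [residueCoords, LinearMap.pi_apply, LinearMap.comp_apply, Basis.coord_apply,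
    ← b.equivFun_apply, LinearEquiv.apply_symm_apply, Algebra.linearMap_apply,
    ResidueField.algebraMap_eq, hd]

noncomputable def quotientEquivResidueCoords (hπ : Irreducible π) (b : Basis ι R M) :
    (M ⧸ redSub π 1 M) ≃ₗ[R] (ι → ResidueField R) :=
  (Submodule.quotEquivOfEq _ _ (ker_residueCoords hπ b).symm).trans
    ((residueCoords b).quotKerEquivOfSurjective (residueCoords_surjective b))

theorem quotientEquivResidueCoords_mk (hπ : Irreducible π) (b : Basis ι R M) (x : M) :
    quotientEquivResidueCoords hπ b (Submodule.Quotient.mk x) = residueCoords b x :=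
  rfl

end ResidueCoordinates

theorem card_inRadC (hπ : Irreducible π) (hg : g ∈ SWith π Q fun i => b i)
    (hmax : ∀ c ∈ GKSet π Q, toLex c ≤ toLex g) :
    Nat.card {v // inRadC π Q v} =
      Nat.card {c : Fin n → ResidueField R // ∀ i, g i = 0 → c i = 0} := by
  refine Nat.card_congr ((quotientEquivResidueCoords hπ b).toEquiv.subtypeEquiv fun v => ?_)
  induction v using Submodule.Quotient.induction_on with
  | H x =>
    rw [inRadC_mk_iff, mem_radicalPreimage_iff_dvd_repr hπ hg hmax]
    simp [quotientEquivResidueCoords_mk, residueCoords, residue_eq_zero_iff_dvd hπ]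

end Radical

end DiscreteValuationRing

/-- `a(L') = dim_κ (L'⊗κ)/Rad(L'⊗κ)` equals the number of zero
entries of `GK(L')`; equivalently `#Rad(L'⊗κ) = f^{n - #zeros(GK(L'))}`. -/
theorem statement_6 (π : 𝔬) (hπ : Irreducible π) {n : ℕ}
    (Q' : QuadraticForm 𝔬 (Fin n → 𝔬)) (hQ' : IsQuadLattice Q') :
    Nat.card {v : (Fin n → 𝔬) ⧸ redSub π 1 (Fin n → 𝔬) // inRadC π Q' v} =
      Nat.card (IsLocalRing.ResidueField 𝔬) ^
        (n - (Finset.univ.filter fun i => GKinv π Q' i = 0).card) := by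
  obtain ⟨⟨b, hb⟩, hmax⟩ := GKinv_spec hπ.not_isUnit hQ'
  rw [card_inRadC hπ hb hmax, card_subtype_forall_imp_eq_zero, Fintype.card_fin]

end S6
end GKPaper
end

section
/- Let L be a free 𝔬-module of rank n with basis (e_1,…,e_n), let V = L ⊗_𝔬 F, let 1 ≤ d ≤ n, and let L^{(d,n)} ⊆ V be the lattice with basis (e_1,…,e_{n−d}, π^{−1}e_{n−d+1},…,π^{−1}e_n). Let L' be a lattice in V containing L. If L' contains no lattice L'' with L ⊆ L'' ⊆ L^{(d,n)} and [L'':L] = 1, then there exists an 𝔬-submodule M' of L' such that L' = M' ⊕ (𝔬e_{n−d+1} ⊕ ⋯ ⊕ 𝔬e_n) and L = (L' ∩ M') ⊕ (𝔬e_{n−d+1} ⊕ ⋯ ⊕ 𝔬e_n). -/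
namespace GKPaper

section S7

variable {𝔬 : Type*} [CommRing 𝔬] [IsDomain 𝔬] [IsDiscreteValuationRing 𝔬]
  [CharZero 𝔬] [Finite (IsLocalRing.ResidueField 𝔬)]
  [IsAdicComplete (IsLocalRing.maximalIdeal 𝔬) 𝔬]
  {F : Type*} [Field F] [Algebra 𝔬 F] [IsFractionRing 𝔬 F]

variable (𝔬) in
/-- The lattice `L^{(d,n)} ⊆ V` with basis
`(e_1, …, e_{n-d}, π⁻¹ e_{n-d+1}, …, π⁻¹ e_n)`. -/
noncomputable def upLat (π : 𝔬) (n d : ℕ) : Submodule 𝔬 (Fin n → F) :=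
  Submodule.span 𝔬 (Set.range fun i : Fin n =>
    if (i : ℕ) < n - d then (Pi.single i 1 : Fin n → F)
    else (algebraMap 𝔬 F π)⁻¹ • (Pi.single i 1 : Fin n → F))

variable (𝔬) in
/-- The sublattice `𝔬 e_{n-d+1} ⊕ ⋯ ⊕ 𝔬 e_n` of `L`. -/
noncomputable def tailLat (n d : ℕ) : Submodule 𝔬 (Fin n → F) :=
  Submodule.span 𝔬
    ((fun i : Fin n => (Pi.single i 1 : Fin n → F)) '' {i | n - d ≤ (i : ℕ)})


/-! The sublattice `T = 𝔬 e_{n-d+1} ⊕ ⋯ ⊕ 𝔬 e_n` is saturated in `L'`: if `x ∈ L'` and `π x ∈ T`,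
then either `x ∈ L`, and reading coordinates gives `x ∈ T`, or `L + 𝔬 x` is a lattice between `L`
and `L^{(d,n)}` inside `L'` with `L + 𝔬 x / L ≅ κ`, which the hypothesis excludes. Hence `L' / T`
is torsion-free, so free over the DVR `𝔬`, and `T` has a complement `M'` in `L'`; since `T ⊆ L`,
the modular law turns `L' = M' ⊕ T` into `L = (L ∩ M') ⊕ T`. -/

end S7

end GKPaper

theorem Submodule.exists_isCompl_of_projective_quotient {R M : Type*} [Ring R] [AddCommGroup M]
    [Module R M] (N : Submodule R M) [Module.Projective R (M ⧸ N)] :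
    ∃ N' : Submodule R M, IsCompl N N' := by
  obtain ⟨g, hg⟩ := N.mkQ.exists_rightInverse_of_surjective N.range_mkQ
  have hmkQ_g : ∀ q, N.mkQ (g q) = q := LinearMap.congr_fun hg
  refine ⟨LinearMap.range g, ?_, ?_⟩
  · rw [Submodule.disjoint_def]
    rintro _ hxN ⟨q, rfl⟩
    rw [← hmkQ_g q, Submodule.mkQ_apply, (Submodule.Quotient.mk_eq_zero N).mpr hxN, map_zero]
  · rw [codisjoint_iff, eq_top_iff]
    intro x _
    have hx : x - g (N.mkQ x) ∈ N := by
      rw [← Submodule.Quotient.mk_eq_zero, ← Submodule.mkQ_apply, map_sub, hmkQ_g, sub_self]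
    simpa using Submodule.add_mem_sup hx (LinearMap.mem_range_self g (N.mkQ x))

section DiscreteValuationRing

variable {R : Type*} [CommRing R] [IsDomain R] [IsDiscreteValuationRing R]
  {M : Type*} [AddCommGroup M] [Module R M] {π : R}

theorem Submodule.isTorsionFree_quotient_of_smul_mem (hπ : Irreducible π) (N : Submodule R M)
    (hN : ∀ x, π • x ∈ N → x ∈ N) : Module.IsTorsionFree R (M ⧸ N) := by
  have hpow : ∀ k : ℕ, ∀ x, π ^ k • x ∈ N → x ∈ N := by
    intro k
    induction k with
    | zero => simp
    | succ k ih => exact fun x hx => ih x (hN _ (by rwa [← mul_smul, ← pow_succ']))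
  refine .of_smul_eq_zero fun r q hrq => or_iff_not_imp_left.mpr fun hr => ?_
  obtain ⟨x, rfl⟩ := N.mkQ_surjective q
  obtain ⟨k, u, rfl⟩ := IsDiscreteValuationRing.eq_unit_mul_pow_irreducible hr hπ
  rw [← map_smul, Submodule.mkQ_apply, Submodule.Quotient.mk_eq_zero, mul_smul,
    Submodule.smul_mem_iff_of_isUnit _ u.isUnit] at hrq
  simpa using hpow k x hrq

theorem Submodule.exists_isCompl_of_smul_mem [Module.Finite R M] (hπ : Irreducible π)
    (N : Submodule R M) (hN : ∀ x, π • x ∈ N → x ∈ N) :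
    ∃ N' : Submodule R M, IsCompl N N' := by
  have := N.isTorsionFree_quotient_of_smul_mem hπ hN
  exact N.exists_isCompl_of_projective_quotient

theorem Submodule.card_quotient_sup_span_singleton (hπ : Irreducible π) {N : Submodule R M}
    {x : M} (hx : x ∉ N) (hπx : π • x ∈ N) :
    Nat.card (↥(N ⊔ R ∙ x) ⧸ N.comap (N ⊔ R ∙ x).subtype) =
      Nat.card (IsLocalRing.ResidueField R) := by
  set x' : ↥(N ⊔ R ∙ x) := ⟨x, Submodule.mem_sup_right (Submodule.mem_span_singleton_self x)⟩
  set φ := (N.comap (N ⊔ R ∙ x).subtype).mkQ ∘ₗ LinearMap.toSpanSingleton R _ x'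
  have hφ : Function.Surjective φ := by
    rintro ⟨⟨y, hy⟩⟩
    obtain ⟨z, hz, w, hw, rfl⟩ := Submodule.mem_sup.mp hy
    obtain ⟨c, rfl⟩ := Submodule.mem_span_singleton.mp hw
    refine ⟨c, (Submodule.Quotient.eq _).mpr ?_⟩
    simpa [x'] using N.neg_mem hz
  have hker : LinearMap.ker φ = IsLocalRing.maximalIdeal R := by
    have hmem : ∀ c, c ∈ LinearMap.ker φ ↔ c • x ∈ N := fun c => by
      simp [φ, x', Submodule.Quotient.mk_eq_zero]
    refine ((IsLocalRing.maximalIdeal.isMaximal R).eq_of_le ?_ ?_).symm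
    · exact (Ideal.ne_top_iff_one _).mpr (by simpa [hmem] using hx)
    · simpa [hπ.maximalIdeal_eq, Ideal.span_le, hmem] using hπx
  rw [← Nat.card_congr (φ.quotKerEquivOfSurjective hφ).toEquiv, hker]
  rfl

end DiscreteValuationRing

namespace GKPaper

section Coordinates

variable {𝔬 : Type*} [CommRing 𝔬] {F : Type*} [Field F] [Algebra 𝔬 F]

theorem mem_span_image_single_one_iff {ι : Type*} [Fintype ι] [DecidableEq ι] {s : Set ι}
    {x : ι → F} :
    x ∈ Submodule.span 𝔬 ((fun i => (Pi.single i 1 : ι → F)) '' s) ↔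
      (∀ i, x i ∈ Set.range (algebraMap 𝔬 F)) ∧ ∀ i ∉ s, x i = 0 := by
  constructor
  · intro hx
    induction hx using Submodule.span_induction with
    | mem _ hy =>
      obtain ⟨i, hi, rfl⟩ := hy
      refine ⟨fun j => ?_, fun j hj => Pi.single_eq_of_ne (ne_of_mem_of_not_mem hi hj).symm 1⟩
      rcases eq_or_ne j i with rfl | hji
      · exact ⟨1, by simp⟩
      · exact ⟨0, by simp [hji]⟩
    | zero => exact ⟨fun _ => ⟨0, by simp⟩, fun _ _ => rfl⟩
    | add y z _ _ hy hz =>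
      refine ⟨fun i => ?_, fun i hi => by simp [hy.2 i hi, hz.2 i hi]⟩
      obtain ⟨a, ha⟩ := hy.1 i
      obtain ⟨b, hb⟩ := hz.1 i
      exact ⟨a + b, by simp [ha, hb]⟩
    | smul c y _ hy =>
      refine ⟨fun i => ?_, fun i hi => by simp [hy.2 i hi]⟩
      obtain ⟨a, ha⟩ := hy.1 i
      exact ⟨c * a, by simp [ha, Algebra.smul_def]⟩
  · rintro ⟨hint, hzero⟩
    rw [← Finset.univ_sum_single x]
    refine Submodule.sum_mem _ fun i _ => ?_
    by_cases hi : i ∈ s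
    · obtain ⟨c, hc⟩ := hint i
      have : Pi.single i (x i) = c • (Pi.single i 1 : ι → F) := by
        rw [← hc, ← Pi.single_smul, Algebra.smul_def, mul_one]
      exact this ▸ Submodule.smul_mem _ c (Submodule.subset_span ⟨i, hi, rfl⟩)
    · simp [hzero i hi]

theorem mem_stdLat_iff {n : ℕ} {x : Fin n → F} :
    x ∈ stdLat 𝔬 F n ↔ ∀ i, x i ∈ Set.range (algebraMap 𝔬 F) := by
  rw [stdLat, ← Set.image_univ, mem_span_image_single_one_iff]
  simp

theorem mem_tailLat_iff {n d : ℕ} {x : Fin n → F} :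
    x ∈ tailLat 𝔬 n d ↔ x ∈ stdLat 𝔬 F n ∧ ∀ i : Fin n, (i : ℕ) < n - d → x i = 0 := by
  rw [tailLat, mem_span_image_single_one_iff, mem_stdLat_iff]
  simp only [Set.mem_ofPred_eq, not_le]

theorem tailLat_le_stdLat (n d : ℕ) : tailLat 𝔬 (F := F) n d ≤ stdLat 𝔬 F n :=
  Submodule.span_mono (Set.image_subset_range _ _)

theorem span_stdLat (n : ℕ) : Submodule.span F (stdLat 𝔬 F n : Set (Fin n → F)) = ⊤ := by
  rw [stdLat, Submodule.span_span_of_tower]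
  convert (Pi.basisFun F (Fin n)).span_eq using 3
  exact funext fun i => (Pi.basisFun_apply F (Fin n) i).symm

theorem mem_tailLat_of_smul_mem {π : 𝔬} (hπ : algebraMap 𝔬 F π ≠ 0) {n d : ℕ} {x : Fin n → F}
    (hx : x ∈ stdLat 𝔬 F n) (hπx : π • x ∈ tailLat 𝔬 n d) : x ∈ tailLat 𝔬 n d := by
  rw [mem_tailLat_iff] at hπx ⊢
  exact ⟨hx, fun i hi => by simpa [Algebra.smul_def, hπ] using hπx.2 i hi⟩

theorem stdLat_le_upLat {π : 𝔬} (hπ : algebraMap 𝔬 F π ≠ 0) (n d : ℕ) :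
    stdLat 𝔬 F n ≤ upLat 𝔬 (F := F) π n d := by
  rw [stdLat, Submodule.span_le]
  rintro _ ⟨i, rfl⟩
  by_cases hi : (i : ℕ) < n - d
  · exact Submodule.subset_span ⟨i, by simp [hi]⟩
  · have hmem : (algebraMap 𝔬 F π)⁻¹ • (Pi.single i 1 : Fin n → F) ∈ upLat 𝔬 π n d :=
      Submodule.subset_span ⟨i, by simp [hi]⟩
    simpa [← algebraMap_smul (A := F) π, smul_inv_smul₀ hπ] using Submodule.smul_mem _ π hmem

theorem mem_upLat_of_smul_mem_tailLat {π : 𝔬} (hπ : algebraMap 𝔬 F π ≠ 0) {n d : ℕ}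
    {x : Fin n → F} (hπx : π • x ∈ tailLat 𝔬 n d) : x ∈ upLat 𝔬 (F := F) π n d := by
  have hmap : (tailLat 𝔬 n d).map
      ((LinearMap.lsmul F (Fin n → F) (algebraMap 𝔬 F π)⁻¹).restrictScalars 𝔬) ≤
        upLat 𝔬 π n d := by
    rw [tailLat, Submodule.map_span, Submodule.span_le]
    rintro _ ⟨_, ⟨i, hi, rfl⟩, rfl⟩
    have hi : n - d ≤ (i : ℕ) := hi
    exact Submodule.subset_span ⟨i, by simp [hi]⟩
  have := hmap ⟨π • x, hπx, rfl⟩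
  rwa [LinearMap.restrictScalars_apply, LinearMap.lsmul_apply, ← algebraMap_smul (A := F) π x,
    inv_smul_smul₀ hπ] at this

theorem mem_tailLat_of_smul_mem_of_forall_quotCard_ne [IsDomain 𝔬] [IsDiscreteValuationRing 𝔬]
    {π : 𝔬} (hπ : Irreducible π) (hπ0 : algebraMap 𝔬 F π ≠ 0) {n d : ℕ}
    {L' : Submodule 𝔬 (Fin n → F)} (hLL' : stdLat 𝔬 F n ≤ L')
    (hno : ∀ L'' : Submodule 𝔬 (Fin n → F), IsLattice F L'' →
      stdLat 𝔬 F n ≤ L'' → L'' ≤ upLat 𝔬 (F := F) π n d → L'' ≤ L' →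
      quotCard F (stdLat 𝔬 F n) L'' ≠ Nat.card (IsLocalRing.ResidueField 𝔬))
    {x : Fin n → F} (hxL' : x ∈ L') (hπx : π • x ∈ tailLat 𝔬 n d) : x ∈ tailLat 𝔬 n d := by
  by_cases hx : x ∈ stdLat 𝔬 F n
  · exact mem_tailLat_of_smul_mem hπ0 hx hπx
  refine absurd (Submodule.card_quotient_sup_span_singleton hπ hx (tailLat_le_stdLat n d hπx))
    (hno _ ⟨?_, ?_⟩ le_sup_left ?_ ?_)
  · exact (Submodule.fg_span (Set.finite_range _)).sup (Submodule.fg_span_singleton x)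
  · exact eq_top_iff.mpr
      ((span_stdLat n).ge.trans (Submodule.span_mono (SetLike.coe_subset_coe.mpr le_sup_left)))
  · exact sup_le (stdLat_le_upLat hπ0 n d)
      ((Submodule.span_singleton_le_iff_mem _ _).mpr (mem_upLat_of_smul_mem_tailLat hπ0 hπx))
  · exact sup_le hLL' ((Submodule.span_singleton_le_iff_mem _ _).mpr hxL')

end Coordinates

end GKPaper

theorem Submodule.map_subtype_sup_eq_and_inf_eq_bot_of_isCompl {R M : Type*} [Ring R]
    [AddCommGroup M] [Module R M] {P T : Submodule R M} (hTP : T ≤ P) {N : Submodule R P}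
    (hN : IsCompl (T.comap P.subtype) N) :
    N.map P.subtype ⊔ T = P ∧ N.map P.subtype ⊓ T = ⊥ := by
  have hT : (T.comap P.subtype).map P.subtype = T := by
    rw [Submodule.map_comap_subtype, inf_eq_right.mpr hTP]
  constructor
  · rw [← hT, ← Submodule.map_sup, hN.symm.sup_eq_top, Submodule.map_top, Submodule.range_subtype]
  · rw [← hT, ← Submodule.map_inf _ P.injective_subtype, hN.symm.inf_eq_bot, Submodule.map_bot]

namespace GKPaper

section S7

variable {𝔬 : Type*} [CommRing 𝔬] [IsDomain 𝔬] [IsDiscreteValuationRing 𝔬]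
  [CharZero 𝔬] [Finite (IsLocalRing.ResidueField 𝔬)]
  [IsAdicComplete (IsLocalRing.maximalIdeal 𝔬) 𝔬]
  {F : Type*} [Field F] [Algebra 𝔬 F] [IsFractionRing 𝔬 F]

theorem statement_7_general (π : 𝔬) (hπ : Irreducible π) {n d : ℕ}
    (L' : Submodule 𝔬 (Fin n → F)) (hlat : IsLattice F L')
    (hLL' : stdLat 𝔬 F n ≤ L')
    (hno : ∀ L'' : Submodule 𝔬 (Fin n → F), IsLattice F L'' →
      stdLat 𝔬 F n ≤ L'' → L'' ≤ upLat 𝔬 (F := F) π n d → L'' ≤ L' →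
      quotCard F (stdLat 𝔬 F n) L'' ≠ Nat.card (IsLocalRing.ResidueField 𝔬)) :
    ∃ M' : Submodule 𝔬 (Fin n → F), M' ≤ L' ∧
      M' ⊔ tailLat 𝔬 (F := F) n d = L' ∧ M' ⊓ tailLat 𝔬 (F := F) n d = ⊥ ∧
      (stdLat 𝔬 F n ⊓ M') ⊔ tailLat 𝔬 (F := F) n d = stdLat 𝔬 F n ∧
      (stdLat 𝔬 F n ⊓ M') ⊓ tailLat 𝔬 (F := F) n d = ⊥ := by
  have : Module.Finite 𝔬 L' := Module.Finite.iff_fg.mpr hlat.1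
  have hπ0 : algebraMap 𝔬 F π ≠ 0 :=
    (map_ne_zero_iff _ (IsFractionRing.injective 𝔬 F)).mpr hπ.ne_zero
  obtain ⟨N, hN⟩ := ((tailLat 𝔬 n d).comap L'.subtype).exists_isCompl_of_smul_mem hπ
    fun v hv => mem_tailLat_of_smul_mem_of_forall_quotCard_ne hπ hπ0 hLL' hno v.2 hv
  have htail : tailLat 𝔬 (F := F) n d ≤ stdLat 𝔬 F n := tailLat_le_stdLat n d
  obtain ⟨hsup, hinf⟩ :=
    Submodule.map_subtype_sup_eq_and_inf_eq_bot_of_isCompl (htail.trans hLL') hN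
  refine ⟨N.map L'.subtype, Submodule.map_subtype_le _ _, hsup, hinf, ?_, ?_⟩
  · rw [inf_sup_assoc_of_le _ htail, hsup, inf_eq_left.mpr hLL']
  · exact disjoint_iff.mp ((disjoint_iff.mpr hinf).mono_left inf_le_right)

/-- if a lattice `L' ⊇ L` contains no lattice `L''` with
`L ⊆ L'' ⊆ L^{(d,n)}` and `[L'':L] = 1` (i.e. `#(L''/L) = f`), then `L'` splits as
`M' ⊕ (𝔬 e_{n-d+1} ⊕ ⋯ ⊕ 𝔬 e_n)` with `L = (L ∩ M') ⊕ (𝔬 e_{n-d+1} ⊕ ⋯ ⊕ 𝔬 e_n)`. -/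
theorem statement_7 (π : 𝔬) (hπ : Irreducible π) {n d : ℕ} (hd1 : 1 ≤ d) (hdn : d ≤ n)
    (L' : Submodule 𝔬 (Fin n → F)) (hlat : IsLattice F L')
    (hLL' : stdLat 𝔬 F n ≤ L')
    (hno : ∀ L'' : Submodule 𝔬 (Fin n → F), IsLattice F L'' →
      stdLat 𝔬 F n ≤ L'' → L'' ≤ upLat 𝔬 (F := F) π n d → L'' ≤ L' →
      quotCard F (stdLat 𝔬 F n) L'' ≠ Nat.card (IsLocalRing.ResidueField 𝔬)) :
    ∃ M' : Submodule 𝔬 (Fin n → F), M' ≤ L' ∧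
      M' ⊔ tailLat 𝔬 (F := F) n d = L' ∧ M' ⊓ tailLat 𝔬 (F := F) n d = ⊥ ∧
      (stdLat 𝔬 F n ⊓ M') ⊔ tailLat 𝔬 (F := F) n d = stdLat 𝔬 F n ∧
      (stdLat 𝔬 F n ⊓ M') ⊓ tailLat 𝔬 (F := F) n d = ⊥ :=
  statement_7_general π hπ L' hlat hLL' hno

end S7

end GKPaper
end

section
/- Let X = [[a,b],[b,c]] be a nondegenerate half-integral symmetric 2×2 matrix over ℤ_2 (a, c ∈ ℤ_2, 2b ∈ ℤ_2) whose associated binary quadratic form is anisotropic over ℚ_2, and suppose GK(X) = (a_1, a_1+2t) for some t ≥ 0. If X is optimal, then ord(a) = a_1, ord(2b) = a_1 + t, and ord(c) = a_1 + 2t. Consequently, every optimal Gram matrix of an anisotropic quadratic ℤ_2-lattice of rank 2 is a reduced form. -/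
namespace GKPaper

section Mat2

open scoped Matrix

/-- `B` is half-integral over `ℤ₂`: diagonal entries and doubled off-diagonal
entries lie in `ℤ₂`. -/
def HalfInt {n : ℕ} (B : Matrix (Fin n) (Fin n) ℚ_[2]) : Prop :=
  (∀ i, ‖B i i‖ ≤ 1) ∧ ∀ i j, ‖2 * B i j‖ ≤ 1

/-- `S(B)`: non-decreasing `a` with `ord(b_ii) ≥ a_i` and `ord(2 b_ij) ≥ (a_i + a_j)/2`. -/
def SMat {n : ℕ} (B : Matrix (Fin n) (Fin n) ℚ_[2]) : Set (Fin n → ℕ) :=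
  {a | Monotone a ∧ (∀ i, ‖B i i‖ ≤ (2 : ℝ) ^ (-(a i : ℤ))) ∧
    ∀ i j, ‖2 * B i j‖ ^ 2 ≤ (2 : ℝ) ^ (-((a i + a j : ℕ) : ℤ))}

/-- `𝐒({B}) = ⋃_{U ∈ GL_n(ℤ₂)} S(ᵗU B U)`. -/
def GKSetMat {n : ℕ} (B : Matrix (Fin n) (Fin n) ℚ_[2]) : Set (Fin n → ℕ) :=
  {a | ∃ U : Matrix (Fin n) (Fin n) ℚ_[2],
    (∀ i j, ‖U i j‖ ≤ 1) ∧ ‖U.det‖ = 1 ∧ a ∈ SMat (Uᵀ * B * U)}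

open Classical in
/-- The Gross–Keating invariant of the half-integral symmetric matrix `B`:
the greatest element of `𝐒({B})` in the lexicographic order. -/
noncomputable def GKMat {n : ℕ} (B : Matrix (Fin n) (Fin n) ℚ_[2]) : Fin n → ℕ :=
  if h : ∃ a ∈ GKSetMat B, ∀ c ∈ GKSetMat B, toLex c ≤ toLex a then h.choose
  else fun _ => 0

/-- `B` is optimal: `GK(B) ∈ S(B)`. -/
noncomputable def OptimalMat {n : ℕ} (B : Matrix (Fin n) (Fin n) ℚ_[2]) : Prop :=
  GKMat B ∈ SMat B

/-- The quadratic form of `B` is anisotropic over `ℚ₂`. -/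
def AnisoMat {n : ℕ} (B : Matrix (Fin n) (Fin n) ℚ_[2]) : Prop :=
  ∀ v : Fin n → ℚ_[2], v ≠ 0 → dotProduct v (B.mulVec v) ≠ 0

/-- `B` is a reduced form of GK-type `(a, σ)` (matrix version of
Ikeda–Katsurada, Definition 3.2). -/
noncomputable def ReducedMat {n : ℕ} (B : Matrix (Fin n) (Fin n) ℚ_[2])
    (a : Fin n → ℕ) (σ : Equiv.Perm (Fin n)) : Prop :=
  Admissible a σ ∧ a ∈ SMat B ∧
  (∀ i, σ i ≠ i → a i ≤ a (σ i) →
    GKMat (B.submatrix ![i, σ i] ![i, σ i]) = ![a i, a (σ i)]) ∧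
  (∀ i, σ i = i → ‖B i i‖ = (2 : ℝ) ^ (-(a i : ℤ))) ∧
  (∀ i j, j ≠ i → j ≠ σ i →
    ‖2 * B i j‖ ^ 2 < (2 : ℝ) ^ (-((a i + a j : ℕ) : ℤ)))

/-- `B` is a reduced form. -/
noncomputable def IsReducedMat {n : ℕ} (B : Matrix (Fin n) (Fin n) ℚ_[2]) : Prop :=
  ∃ σ : Equiv.Perm (Fin n), ReducedMat B (GKMat B) σ


/-!
Anisotropy says that the discriminant `(2b)² - 4ac` is not a square in `ℚ₂`; since every `u`
with `‖u - 1‖ < 1/4` is a square (Hensel), this forces `‖2b‖² ≤ ‖a‖ ‖c‖`.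
Optimality gives `‖a‖ ≤ 2^(-a₁)`, `‖2b‖ ≤ 2^(-(a₁+t))` and `‖c‖ ≤ 2^(-(a₁+2t))`. If one of these
is strict, either the anisotropy bound fails or a change of basis (swapping the basis vectors, or
a shear `!![1, μ; 0, 1]`) exhibits an element of `𝐒({B})` lexicographically larger than `GK(B)`;
this maximum exists since `‖4 det B‖ ≤ 2^(-(d₁+d₂))` for every `d ∈ 𝐒({B})`.

For the second claim, `σ` is the transposition when `a₁ + a₂` is even, and reducedness is then
optimality; when `a₁ + a₂` is odd, `σ = id`, and the same maximality argument shows that `a` and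
`c` have exact orders `a₁` and `a₂`, while parity makes `ord(2b) > (a₁ + a₂)/2`.
-/

section TwoAdicNorm

lemma two_zpow_neg_le_of_le {m n : ℕ} (h : m ≤ n) : (2 : ℝ) ^ (-(n : ℤ)) ≤ (2 : ℝ) ^ (-(m : ℤ)) :=
  zpow_le_zpow_right₀ one_le_two (by omega)

lemma two_zpow_neg_pos (n : ℕ) : 0 < (2 : ℝ) ^ (-(n : ℤ)) := zpow_pos two_pos _

lemma two_zpow_neg_add (m n : ℕ) :
    (2 : ℝ) ^ (-((m + n : ℕ) : ℤ)) = (2 : ℝ) ^ (-(m : ℤ)) * (2 : ℝ) ^ (-(n : ℤ)) := by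
  rw [← zpow_add₀ two_ne_zero]; push_cast; ring_nf

lemma two_zpow_neg_succ (n : ℕ) : (2 : ℝ) ^ (-((n + 1 : ℕ) : ℤ)) = (2 : ℝ) ^ (-(n : ℤ)) / 2 := by
  rw [two_zpow_neg_add]; norm_num; ring

lemma norm_two_padic : ‖(2 : ℚ_[2])‖ = 2⁻¹ := by exact_mod_cast Padic.norm_p (p := 2)

lemma norm_two_pow_padic (n : ℕ) : ‖(2 : ℚ_[2]) ^ n‖ = (2 : ℝ) ^ (-(n : ℤ)) := by
  exact_mod_cast Padic.norm_p_pow (p := 2) n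

lemma norm_two_mul_padic (x : ℚ_[2]) : ‖2 * x‖ = ‖x‖ / 2 := by
  rw [norm_mul, norm_two_padic]; ring

lemma norm_le_two_zpow_succ_of_ne {x : ℚ_[2]} {n : ℕ} (h : ‖x‖ ≤ (2 : ℝ) ^ (-(n : ℤ)))
    (hne : ‖x‖ ≠ (2 : ℝ) ^ (-(n : ℤ))) : ‖x‖ ≤ (2 : ℝ) ^ (-((n + 1 : ℕ) : ℤ)) := by
  have := (Padic.norm_lt_pow_iff_norm_le_pow_sub_one x (-n)).1 (mod_cast h.lt_of_ne hne)
  convert this using 2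
  · norm_num
  · push_cast; ring

lemma norm_sq_le_two_zpow_iff (x : ℚ_[2]) (m : ℕ) :
    ‖x‖ ^ 2 ≤ (2 : ℝ) ^ (-(m : ℤ)) ↔ ‖x‖ ≤ (2 : ℝ) ^ (-(((m + 1) / 2 : ℕ) : ℤ)) := by
  rcases eq_or_ne x 0 with rfl | hx
  · simp [zpow_nonneg]
  have hv : ‖x‖ = (2 : ℝ) ^ (-x.valuation) := by exact_mod_cast Padic.norm_eq_zpow_neg_valuation hx
  rw [hv, ← zpow_natCast, ← _root_.zpow_mul, zpow_le_zpow_iff_right₀ one_lt_two,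
    zpow_le_zpow_iff_right₀ one_lt_two]
  omega

lemma PadicInt.norm_one_add_lt_one_of_isUnit {z : ℤ_[2]} (hz : IsUnit z) : ‖1 + z‖ < 1 := by
  have hz1 : PadicInt.toZMod z = 1 :=
    (by decide : ∀ w : ZMod 2, IsUnit w → w = 1) _ (hz.map PadicInt.toZMod)
  have : 1 + z ∈ IsLocalRing.maximalIdeal ℤ_[2] := by
    rw [← PadicInt.ker_toZMod, RingHom.mem_ker, map_add, map_one, hz1]
    decide
  exact PadicInt.mem_nonunits.1 this

lemma norm_add_le_half_of_norm_eq {x y : ℚ_[2]} (h : ‖x‖ = ‖y‖) : ‖x + y‖ ≤ ‖x‖ / 2 := by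
  rcases eq_or_ne x 0 with rfl | hx
  · simp [norm_eq_zero.1 (h.symm.trans norm_zero)]
  have hu : ‖y / x‖ = 1 := by rw [norm_div, h, div_self (h ▸ norm_ne_zero_iff.2 hx)]
  have hlt : ‖1 + y / x‖ < 1 :=
    PadicInt.norm_one_add_lt_one_of_isUnit (z := ⟨y / x, hu.le⟩) (PadicInt.isUnit_iff.2 hu)
  have hhalf : ‖1 + y / x‖ ≤ 1 / 2 := by
    have := (Padic.norm_lt_pow_iff_norm_le_pow_sub_one (1 + y / x) 0).1 (by simpa using hlt)
    norm_num at this ⊢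
    exact_mod_cast this
  calc ‖x + y‖ = ‖x‖ * ‖1 + y / x‖ := by rw [← norm_mul, mul_add, mul_div_cancel₀ _ hx, mul_one]
    _ ≤ ‖x‖ / 2 := by nlinarith [norm_nonneg x]

-- The residue field is `𝔽₂`, so `δ = 0` or `δ = 2 ^ k` works.
lemma exists_norm_add_mul_sq_le {x a : ℚ_[2]} {m k : ℕ} (ha : ‖a‖ = (2 : ℝ) ^ (-(m : ℤ)))
    (hx : ‖x‖ ≤ (2 : ℝ) ^ (-((m + 2 * k : ℕ) : ℤ))) :
    ∃ δ : ℚ_[2], ‖δ‖ ≤ (2 : ℝ) ^ (-(k : ℤ)) ∧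
      ‖x + a * δ ^ 2‖ ≤ (2 : ℝ) ^ (-((m + 2 * k + 1 : ℕ) : ℤ)) := by
  by_cases h : ‖x‖ = (2 : ℝ) ^ (-((m + 2 * k : ℕ) : ℤ))
  · refine ⟨2 ^ k, (norm_two_pow_padic k).le, ?_⟩
    have hnorm : ‖x‖ = ‖a * ((2 : ℚ_[2]) ^ k) ^ 2‖ := by
      rw [h, norm_mul, norm_pow, norm_two_pow_padic, ha, two_mul, two_zpow_neg_add,
        two_zpow_neg_add, sq]
    rw [two_zpow_neg_succ, ← h]
    exact norm_add_le_half_of_norm_eq hnorm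
  · exact ⟨0, by simp, by simpa using norm_le_two_zpow_succ_of_ne hx h⟩

lemma Padic.exists_mul_self_eq_of_norm_sub_one_lt {u : ℚ_[2]} (hu : ‖u - 1‖ < 1 / 4) :
    ∃ s : ℚ_[2], s * s = u := by
  have hu1 : ‖u‖ ≤ 1 := by
    have := IsUltrametricDist.norm_add_le_max (u - 1) 1
    rw [sub_add_cancel, norm_one] at this
    exact this.trans (max_le (by linarith) le_rfl)
  set U : ℤ_[2] := ⟨u, hu1⟩
  have hnorm : ‖(Polynomial.X ^ 2 - Polynomial.C U).aeval (1 : ℤ_[2])‖ <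
      ‖(Polynomial.X ^ 2 - Polynomial.C U).derivative.aeval (1 : ℤ_[2])‖ ^ 2 := by
    have h2 : ‖(2 : ℤ_[2])‖ = 2⁻¹ := by exact_mod_cast PadicInt.norm_p (p := 2)
    have h1U : ‖1 - U‖ = ‖u - 1‖ := by
      rw [← norm_neg, neg_sub, PadicInt.norm_def]; rfl
    norm_num [Polynomial.derivative_X_pow, h1U, h2]
    linarith
  obtain ⟨z, hz, -⟩ := hensels_lemma hnorm
  refine ⟨z, ?_⟩
  have : z * z = U := by
    simpa [sub_eq_zero, sq] using hz
  exact_mod_cast congrArg ((↑) : ℤ_[2] → ℚ_[2]) this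

end TwoAdicNorm

section Anisotropic

lemma AnisoMat.fst_ne_zero {a b c : ℚ_[2]} (h : AnisoMat !![a, b; b, c]) : a ≠ 0 := by
  intro ha
  refine h ![1, 0] (by simp) ?_
  simp [dotProduct, Matrix.mulVec, ha]

lemma AnisoMat.norm_two_mul_sq_le {a b c : ℚ_[2]} (h : AnisoMat !![a, b; b, c]) :
    ‖2 * b‖ ^ 2 ≤ ‖a‖ * ‖c‖ := by
  by_contra! hlt
  have hb : b ≠ 0 := by
    rintro rfl
    simp only [mul_zero, norm_zero] at hlt
    nlinarith [norm_nonneg a, norm_nonneg c]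
  have hu : ‖(1 - a * c / b ^ 2) - 1‖ < 1 / 4 := by
    have hb2 : 0 < ‖b‖ ^ 2 := by positivity
    rw [sub_sub_cancel_left, norm_neg, norm_div, norm_mul, norm_pow, div_lt_iff₀ hb2]
    rw [norm_two_mul_padic] at hlt
    linarith
  obtain ⟨s, hs⟩ := Padic.exists_mul_self_eq_of_norm_sub_one_lt hu
  -- as `s ^ 2 = 1 - a c / b ^ 2`, the vector `(b (s - 1), a)` is isotropic
  refine h ![b * (s - 1), a] (fun hv => h.fst_ne_zero (by simpa using congrFun hv 1)) ?_
  simp [dotProduct, Matrix.mulVec]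
  field_simp at hs
  linear_combination a * hs

lemma AnisoMat.add_le_two_mul {a b c : ℚ_[2]} (h : AnisoMat !![a, b; b, c]) {p q r : ℕ}
    (ha : ‖a‖ ≤ (2 : ℝ) ^ (-(p : ℤ))) (hc : ‖c‖ ≤ (2 : ℝ) ^ (-(q : ℤ)))
    (hb : ‖2 * b‖ = (2 : ℝ) ^ (-(r : ℤ))) : p + q ≤ 2 * r := by
  have : (2 : ℝ) ^ (-((r + r : ℕ) : ℤ)) ≤ (2 : ℝ) ^ (-((p + q : ℕ) : ℤ)) := by
    rw [two_zpow_neg_add, two_zpow_neg_add, ← hb, ← sq]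
    exact h.norm_two_mul_sq_le.trans (mul_le_mul ha hc (norm_nonneg _) (two_zpow_neg_pos _).le)
  have := (zpow_le_zpow_iff_right₀ one_lt_two).1 this
  omega

end Anisotropic

section GrossKeating

lemma norm_two_mul_le_padic (x : ℚ_[2]) : ‖2 * x‖ ≤ ‖x‖ := by
  rw [norm_two_mul_padic]; linarith [norm_nonneg x]

lemma mem_SMat_fin_two_iff {x y z : ℚ_[2]} {p q : ℕ} :
    ![p, q] ∈ SMat !![x, y; y, z] ↔ p ≤ q ∧ ‖x‖ ≤ (2 : ℝ) ^ (-(p : ℤ)) ∧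
      ‖z‖ ≤ (2 : ℝ) ^ (-(q : ℤ)) ∧ ‖2 * y‖ ≤ (2 : ℝ) ^ (-(((p + q + 1) / 2 : ℕ) : ℤ)) := by
  have hdiag (w : ℚ_[2]) (n : ℕ) (hw : ‖w‖ ≤ (2 : ℝ) ^ (-(n : ℤ))) :
      ‖2 * w‖ ≤ (2 : ℝ) ^ (-(((n + n + 1) / 2 : ℕ) : ℤ)) := by
    rw [show (n + n + 1) / 2 = n by omega]
    exact (norm_two_mul_le_padic w).trans hw
  simp only [SMat, Set.mem_ofPred_eq, Fin.monotone_iff_le_succ, Fin.forall_fin_one,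
    Fin.forall_fin_two, norm_sq_le_two_zpow_iff, Fin.castSucc_zero, Fin.succ_zero_eq_one,
    Matrix.of_apply, Matrix.cons_val_zero, Matrix.cons_val_one, Nat.add_comm q p]
  exact ⟨fun ⟨hpq, ⟨hx, hz⟩, ⟨_, hy⟩, _⟩ => ⟨hpq, hx, hz, hy⟩,
    fun ⟨hpq, hx, hz, hy⟩ => ⟨hpq, ⟨hx, hz⟩, ⟨hdiag x p hx, hy⟩, hy, hdiag z q hz⟩⟩

lemma SMat_subset_GKSetMat {n : ℕ} (B : Matrix (Fin n) (Fin n) ℚ_[2]) : SMat B ⊆ GKSetMat B :=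
  fun d hd => ⟨1, fun i j => by by_cases h : i = j <;> simp [Matrix.one_apply, h], by simp,
    by simpa using hd⟩

lemma GKSetMat_conj_subset {n : ℕ} {B U : Matrix (Fin n) (Fin n) ℚ_[2]}
    (hU : ∀ i j, ‖U i j‖ ≤ 1) (hUdet : ‖U.det‖ = 1) : GKSetMat (Uᵀ * B * U) ⊆ GKSetMat B := by
  rintro d ⟨V, hV, hVdet, hd⟩
  refine ⟨U * V, fun i j => ?_, by rw [Matrix.det_mul, norm_mul, hUdet, hVdet, one_mul], ?_⟩
  · rw [Matrix.mul_apply]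
    exact IsUltrametricDist.norm_sum_le_of_forall_le_of_nonneg zero_le_one fun k _ => by
      rw [norm_mul]; exact mul_le_one₀ (hU i k) (norm_nonneg _) (hV k j)
  · simpa only [Matrix.transpose_mul, Matrix.mul_assoc] using hd

lemma GKSetMat_swap (x y z : ℚ_[2]) : GKSetMat !![z, y; y, x] = GKSetMat !![x, y; y, z] := by
  have hU : ∀ i j, ‖(!![0, 1; 1, 0] : Matrix (Fin 2) (Fin 2) ℚ_[2]) i j‖ ≤ 1 := by
    intro i j; fin_cases i <;> fin_cases j <;> simp
  have hUdet : ‖(!![0, 1; 1, 0] : Matrix (Fin 2) (Fin 2) ℚ_[2]).det‖ = 1 := by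
    simp [Matrix.det_fin_two_of]
  have hconj (x y z : ℚ_[2]) :
      (!![0, 1; 1, 0] : Matrix (Fin 2) (Fin 2) ℚ_[2])ᵀ * !![x, y; y, z] * !![0, 1; 1, 0] =
        !![z, y; y, x] := by
    ext i j; fin_cases i <;> fin_cases j <;> simp [Matrix.mul_apply]
  refine subset_antisymm ?_ ?_
  · simpa only [hconj] using GKSetMat_conj_subset (B := !![x, y; y, z]) hU hUdet
  · simpa only [hconj] using GKSetMat_conj_subset (B := !![z, y; y, x]) hU hUdet

lemma GKMat_swap (x y z : ℚ_[2]) : GKMat !![z, y; y, x] = GKMat !![x, y; y, z] := by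
  rw [GKMat, GKMat, GKSetMat_swap]

lemma SMat_shear_subset {a b c μ : ℚ_[2]} (hμ : ‖μ‖ ≤ 1) :
    SMat !![a, a * μ + b; a * μ + b, a * μ ^ 2 + 2 * b * μ + c] ⊆ GKSetMat !![a, b; b, c] := by
  have hU : ∀ i j, ‖(!![1, μ; 0, 1] : Matrix (Fin 2) (Fin 2) ℚ_[2]) i j‖ ≤ 1 := by
    intro i j; fin_cases i <;> fin_cases j <;> simp [hμ]
  have hconj : (!![1, μ; 0, 1] : Matrix (Fin 2) (Fin 2) ℚ_[2])ᵀ * !![a, b; b, c] * !![1, μ; 0, 1] =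
      !![a, a * μ + b; a * μ + b, a * μ ^ 2 + 2 * b * μ + c] := by
    ext i j; fin_cases i <;> fin_cases j <;> simp [Matrix.mul_apply] <;> ring
  rw [← hconj]
  exact (SMat_subset_GKSetMat _).trans (GKSetMat_conj_subset hU (by simp [Matrix.det_fin_two_of]))

lemma norm_four_mul_det_le {B : Matrix (Fin 2) (Fin 2) ℚ_[2]} {d : Fin 2 → ℕ}
    (hd : d ∈ SMat B) : ‖4 * B.det‖ ≤ (2 : ℝ) ^ (-((d 0 + d 1 : ℕ) : ℤ)) := by
  obtain ⟨-, -, hoff⟩ := hd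
  have hprod (i j k l : Fin 2) (h : d i + d j + (d k + d l) = 2 * (d 0 + d 1)) :
      ‖(2 * B i j) * (2 * B k l)‖ ≤ (2 : ℝ) ^ (-((d 0 + d 1 : ℕ) : ℤ)) := by
    have := mul_le_mul (hoff i j) (hoff k l) (by positivity) (zpow_pos two_pos _).le
    rw [← mul_pow, ← norm_mul, ← two_zpow_neg_add, h, norm_sq_le_two_zpow_iff,
      show (2 * (d 0 + d 1) + 1) / 2 = d 0 + d 1 by omega] at this
    exact this
  have h4 : 4 * B.det = (2 * B 0 0) * (2 * B 1 1) + -((2 * B 0 1) * (2 * B 1 0)) := by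
    rw [Matrix.det_fin_two]; ring
  rw [h4]
  refine (IsUltrametricDist.norm_add_le_max _ _).trans (max_le ?_ ?_)
  · exact hprod 0 0 1 1 (by omega)
  · exact (norm_neg _).le.trans (hprod 0 1 1 0 (by omega))

lemma GKSetMat_finite {B : Matrix (Fin 2) (Fin 2) ℚ_[2]} (hdet : B.det ≠ 0) :
    (GKSetMat B).Finite := by
  have h4 : 4 * B.det ≠ 0 := mul_ne_zero (by norm_num) hdet
  refine (Set.finite_Iic (fun _ => (4 * B.det).valuation.toNat)).subset ?_
  rintro d ⟨U, -, hUdet, hd⟩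
  have hle := norm_four_mul_det_le hd
  have hnorm : ‖4 * (Uᵀ * B * U).det‖ = ‖4 * B.det‖ := by
    simp only [Matrix.det_mul, Matrix.det_transpose, norm_mul, hUdet]; ring
  rw [hnorm, Padic.norm_eq_zpow_neg_valuation h4] at hle
  have := (zpow_le_zpow_iff_right₀ (by norm_num : (1 : ℝ) < (2 : ℕ))).1 (by exact_mod_cast hle)
  intro i
  fin_cases i <;> simp <;> omega

lemma toLex_le_GKMat {n : ℕ} {B : Matrix (Fin n) (Fin n) ℚ_[2]} (hfin : (GKSetMat B).Finite)
    {d : Fin n → ℕ} (hd : d ∈ GKSetMat B) : toLex d ≤ toLex (GKMat B) := by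
  have hex := Set.exists_max_image _ toLex hfin ⟨d, hd⟩
  rw [GKMat, dif_pos hex]
  exact hex.choose_spec.2 d hd

lemma le_of_toLex_le_fin_two {p q α β : ℕ} (h : toLex ![p, q] ≤ toLex ![α, β]) :
    p ≤ α ∧ (p = α → q ≤ β) :=
  ⟨Pi.apply_le_of_toLex (i := 0) h fun j hj => absurd hj (Fin.not_lt_zero j),
    fun hp => Pi.apply_le_of_toLex (i := 1) h fun j hj => by
      fin_cases j
      · exact hp
      · exact absurd hj (lt_irrefl _)⟩

lemma le_of_mem_GKSetMat {B : Matrix (Fin 2) (Fin 2) ℚ_[2]} (hdet : B.det ≠ 0) {α β p q : ℕ}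
    (hGK : GKMat B = ![α, β]) (hd : ![p, q] ∈ GKSetMat B) : p ≤ α ∧ (p = α → q ≤ β) :=
  le_of_toLex_le_fin_two (hGK ▸ toLex_le_GKMat (GKSetMat_finite hdet) hd)

end GrossKeating

section Optimal

variable {a b c : ℚ_[2]}

lemma norm_fst_eq_of_GKMat_eq_even (hdet : (!![a, b; b, c]).det ≠ 0)
    (haniso : AnisoMat !![a, b; b, c]) {a₁ t : ℕ}
    (hGK : GKMat !![a, b; b, c] = ![a₁, a₁ + 2 * t]) (hopt : OptimalMat !![a, b; b, c]) :
    ‖a‖ = (2 : ℝ) ^ (-(a₁ : ℤ)) := by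
  rw [OptimalMat, hGK, mem_SMat_fin_two_iff] at hopt
  obtain ⟨-, ha, hc, hb⟩ := hopt
  by_contra hne
  have ha' := norm_le_two_zpow_succ_of_ne ha hne
  rcases Nat.eq_zero_or_pos t with rfl | ht
  -- for `t = 0` either anisotropy fails or swapping `a` and `c` gives `(a₁, a₁ + 1)`
  · rw [show (a₁ + (a₁ + 2 * 0) + 1) / 2 = a₁ by omega] at hb
    rw [Nat.mul_zero, Nat.add_zero] at hc
    by_cases hb' : ‖2 * b‖ = (2 : ℝ) ^ (-(a₁ : ℤ))
    · have := haniso.add_le_two_mul ha' hc hb'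
      omega
    · have hmem : ![a₁, a₁ + 1] ∈ GKSetMat !![a, b; b, c] := by
        rw [← GKSetMat_swap]
        refine SMat_subset_GKSetMat _ (mem_SMat_fin_two_iff.2 ⟨by omega, hc, ha', ?_⟩)
        rw [show (a₁ + (a₁ + 1) + 1) / 2 = a₁ + 1 by omega]
        exact norm_le_two_zpow_succ_of_ne hb hb'
      have := le_of_mem_GKSetMat hdet hGK hmem
      omega
  · have hmem : ![a₁ + 1, a₁ + 2 * t - 1] ∈ GKSetMat !![a, b; b, c] := by
      refine SMat_subset_GKSetMat _ (mem_SMat_fin_two_iff.2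
        ⟨by omega, ha', hc.trans (two_zpow_neg_le_of_le (by omega)), ?_⟩)
      rwa [show (a₁ + 1 + (a₁ + 2 * t - 1) + 1) / 2 = (a₁ + (a₁ + 2 * t) + 1) / 2 by omega]
    have := le_of_mem_GKSetMat hdet hGK hmem
    omega

lemma norm_two_mul_eq_of_GKMat_eq_even (hdet : (!![a, b; b, c]).det ≠ 0) {a₁ t : ℕ}
    (hGK : GKMat !![a, b; b, c] = ![a₁, a₁ + 2 * t]) (hopt : OptimalMat !![a, b; b, c])
    (ha : ‖a‖ = (2 : ℝ) ^ (-(a₁ : ℤ))) :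
    ‖2 * b‖ = (2 : ℝ) ^ (-((a₁ + t : ℕ) : ℤ)) := by
  rw [OptimalMat, hGK, mem_SMat_fin_two_iff] at hopt
  obtain ⟨-, -, hc, hb⟩ := hopt
  rw [show (a₁ + (a₁ + 2 * t) + 1) / 2 = a₁ + t by omega] at hb
  by_contra hne
  have hb' := norm_le_two_zpow_succ_of_ne hb hne
  have ha0 : a ≠ 0 := norm_ne_zero_iff.1 (ha ▸ (two_zpow_neg_pos a₁).ne')
  have hba : ‖b / a‖ ≤ (2 : ℝ) ^ (-(t : ℤ)) := by
    rw [norm_div, ha, div_le_iff₀ (two_zpow_neg_pos _), ← two_zpow_neg_add, Nat.add_comm t]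
    rw [norm_two_mul_padic, two_zpow_neg_succ] at hb'
    linarith
  have hc' : ‖c - a * (b / a) ^ 2‖ ≤ (2 : ℝ) ^ (-((a₁ + 2 * t : ℕ) : ℤ)) := by
    rw [sub_eq_add_neg]
    refine (IsUltrametricDist.norm_add_le_max _ _).trans (max_le hc ?_)
    rw [norm_neg, norm_mul, norm_pow, ha, two_mul, two_zpow_neg_add, two_zpow_neg_add, ← sq]
    gcongr
  -- the shear by `μ = -b / a + δ` turns `b` into `a δ` and `c` into `c - b ^ 2 / a + a δ ^ 2`
  obtain ⟨δ, hδ, hcorner⟩ := exists_norm_add_mul_sq_le ha hc'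
  have hμ : ‖-(b / a) + δ‖ ≤ 1 :=
    (IsUltrametricDist.norm_add_le_max _ _).trans
      (max_le (by rw [norm_neg]; exact hba.trans (zpow_le_one_of_nonpos₀ one_le_two (by omega)))
        (hδ.trans (zpow_le_one_of_nonpos₀ one_le_two (by omega))))
  have hmem : ![a₁, a₁ + 2 * t + 1] ∈ GKSetMat !![a, b; b, c] := by
    refine SMat_shear_subset hμ (mem_SMat_fin_two_iff.2 ⟨by omega, ha.le, ?_, ?_⟩)
    · convert hcorner using 2
      field_simp
      ring
    · rw [show (a₁ + (a₁ + 2 * t + 1) + 1) / 2 = a₁ + t + 1 by omega,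
        show a * (-(b / a) + δ) + b = a * δ by field_simp; ring, norm_two_mul_padic, norm_mul, ha,
        two_zpow_neg_succ, two_zpow_neg_add]
      gcongr
  have := le_of_mem_GKSetMat hdet hGK hmem
  omega

lemma norm_snd_eq_of_GKMat_eq_even (haniso : AnisoMat !![a, b; b, c]) {a₁ t : ℕ}
    (hGK : GKMat !![a, b; b, c] = ![a₁, a₁ + 2 * t]) (hopt : OptimalMat !![a, b; b, c])
    (ha : ‖a‖ = (2 : ℝ) ^ (-(a₁ : ℤ))) (hb : ‖2 * b‖ = (2 : ℝ) ^ (-((a₁ + t : ℕ) : ℤ))) :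
    ‖c‖ = (2 : ℝ) ^ (-((a₁ + 2 * t : ℕ) : ℤ)) := by
  rw [OptimalMat, hGK, mem_SMat_fin_two_iff] at hopt
  by_contra hne
  have := haniso.add_le_two_mul ha.le (norm_le_two_zpow_succ_of_ne hopt.2.2.1 hne) hb
  omega

lemma norms_eq_of_GKMat_eq_odd (hdet : (!![a, b; b, c]).det ≠ 0) {α β : ℕ}
    (hGK : GKMat !![a, b; b, c] = ![α, β]) (hodd : (α + β) % 2 = 1)
    (hopt : OptimalMat !![a, b; b, c]) :
    ‖a‖ = (2 : ℝ) ^ (-(α : ℤ)) ∧ ‖c‖ = (2 : ℝ) ^ (-(β : ℤ)) ∧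
      ‖2 * b‖ ^ 2 < (2 : ℝ) ^ (-((α + β : ℕ) : ℤ)) := by
  rw [OptimalMat, hGK, mem_SMat_fin_two_iff] at hopt
  obtain ⟨hαβ, ha, hc, hb⟩ := hopt
  -- for odd `α + β` the bound on `2 b` is already strong enough for `(α + 1, β)` and `(α, β + 1)`
  have hb' : ‖2 * b‖ ≤ (2 : ℝ) ^ (-(((α + β + 1 + 1) / 2 : ℕ) : ℤ)) := by
    rwa [show (α + β + 1 + 1) / 2 = (α + β + 1) / 2 by omega]
  refine ⟨?_, ?_, ?_⟩
  · by_contra hne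
    have := le_of_mem_GKSetMat hdet hGK (SMat_subset_GKSetMat _ (mem_SMat_fin_two_iff.2
      ⟨by omega, norm_le_two_zpow_succ_of_ne ha hne, hc, by rwa [Nat.add_right_comm α 1]⟩))
    omega
  · by_contra hne
    have := le_of_mem_GKSetMat hdet hGK (SMat_subset_GKSetMat _ (mem_SMat_fin_two_iff.2
      ⟨by omega, ha, norm_le_two_zpow_succ_of_ne hc hne, by rwa [← Nat.add_assoc]⟩))
    omega
  · rw [← norm_sq_le_two_zpow_iff] at hb'
    exact hb'.trans_lt (zpow_lt_zpow_right₀ one_lt_two (by omega))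

theorem norms_eq_of_GKMat_eq_even (hdet : (!![a, b; b, c]).det ≠ 0)
    (haniso : AnisoMat !![a, b; b, c]) {a₁ t : ℕ}
    (hGK : GKMat !![a, b; b, c] = ![a₁, a₁ + 2 * t]) (hopt : OptimalMat !![a, b; b, c]) :
    ‖a‖ = (2 : ℝ) ^ (-(a₁ : ℤ)) ∧ ‖2 * b‖ = (2 : ℝ) ^ (-((a₁ + t : ℕ) : ℤ)) ∧
      ‖c‖ = (2 : ℝ) ^ (-((a₁ + 2 * t : ℕ) : ℤ)) := by
  have ha := norm_fst_eq_of_GKMat_eq_even hdet haniso hGK hopt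
  have hb := norm_two_mul_eq_of_GKMat_eq_even hdet hGK hopt ha
  exact ⟨ha, hb, norm_snd_eq_of_GKMat_eq_even haniso hGK hopt ha hb⟩

end Optimal

section Reduced

lemma admissible_swap {α β : ℕ} (hle : α ≤ β) (heven : (α + β) % 2 = 0) :
    Admissible ![α, β] (Equiv.swap 0 1) := by
  refine ⟨Equiv.swap_mul_self 0 1, (Finset.card_filter_le _ _).trans (by simp), fun i hi => ?_,
    fun i₀ => ⟨Finset.card_le_one.2 fun x hx y hy => ?_, Finset.card_le_one.2 fun x hx y hy => ?_⟩,
    fun i hi => ?_, fun i hi => ?_⟩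
  · fin_cases i <;> simp at hi
  all_goals try simp only [Finset.mem_filter, Finset.mem_univ, true_and] at hx hy
  all_goals try fin_cases x <;> fin_cases y <;> simp at hx hy ⊢ <;> omega
  all_goals
    fin_cases i <;> simp at hi ⊢
    all_goals first
      | omega
      | simp [hi, show β % 2 = α % 2 by omega]

lemma admissible_one {α β : ℕ} (hodd : (α + β) % 2 = 1) :
    Admissible ![α, β] 1 := by
  refine ⟨one_mul 1, (Finset.card_filter_le _ _).trans (by simp), fun i _ j _ hij => ?_,
    fun i₀ => ⟨Finset.card_le_one.2 fun x hx y hy => ?_, Finset.card_le_one.2 fun x hx y hy => ?_⟩,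
    fun i hi => absurd hi (lt_irrefl _), fun i hi => absurd hi (lt_irrefl _)⟩
  · have hαβ : α % 2 ≠ β % 2 := by omega
    fin_cases i <;> fin_cases j <;> simp [Fin.exists_fin_two, hαβ, hαβ.symm] at hij ⊢
  · simp at hx
  · simp only [Finset.mem_filter, Finset.mem_univ, true_and] at hx hy
    fin_cases x <;> fin_cases y <;> simp at hx hy ⊢ <;> omega

theorem isReducedMat_of_optimal_fin_two {x y z : ℚ_[2]} (hdet : (!![x, y; y, z]).det ≠ 0)
    (hopt : OptimalMat !![x, y; y, z]) : IsReducedMat !![x, y; y, z] := by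
  set α := GKMat !![x, y; y, z] 0
  set β := GKMat !![x, y; y, z] 1
  have hGK : GKMat !![x, y; y, z] = ![α, β] := by
    ext i; fin_cases i <;> rfl
  have hS := hopt
  rw [OptimalMat, hGK] at hS
  have hαβ : α ≤ β := (mem_SMat_fin_two_iff.1 hS).1
  rw [IsReducedMat, hGK]
  rcases Nat.mod_two_eq_zero_or_one (α + β) with heven | hodd
  · refine ⟨Equiv.swap 0 1, admissible_swap hαβ heven, hS, fun i _ hi => ?_, fun i hi => ?_,
      fun i j hji hjσ => ?_⟩
    · fin_cases i
      · have hsub : !![x, y; y, z].submatrix ![0, 1] ![0, 1] = !![x, y; y, z] := by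
          ext i j; fin_cases i <;> fin_cases j <;> rfl
        simpa [hsub] using hGK
      · have hsub : !![x, y; y, z].submatrix ![1, 0] ![1, 0] = !![z, y; y, x] := by
          ext i j; fin_cases i <;> fin_cases j <;> rfl
        have hβα : β = α := le_antisymm (by simpa using hi) hαβ
        simp [hsub, GKMat_swap, hGK, hβα]
    · fin_cases i <;> simp at hi
    · fin_cases i <;> fin_cases j <;> simp at hji hjσ
  · obtain ⟨ha, hc, hb⟩ := norms_eq_of_GKMat_eq_odd hdet hGK hodd hopt
    refine ⟨1, admissible_one hodd, hS, fun i hi => absurd rfl hi, fun i _ => ?_,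
      fun i j hji _ => ?_⟩
    · fin_cases i
      · exact ha
      · exact hc
    · fin_cases i <;> fin_cases j
      · exact absurd rfl hji
      · exact hb
      · show ‖2 * y‖ ^ 2 < (2 : ℝ) ^ (-((β + α : ℕ) : ℤ))
        rwa [Nat.add_comm]
      · exact absurd rfl hji

end Reduced

theorem isReducedMat_of_optimal {Y : Matrix (Fin 2) (Fin 2) ℚ_[2]} (hsym : Yᵀ = Y)
    (hdet : Y.det ≠ 0) (hopt : OptimalMat Y) : IsReducedMat Y := by
  obtain ⟨x, y, z, rfl⟩ : ∃ x y z, Y = !![x, y; y, z] :=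
    ⟨Y 0 0, Y 0 1, Y 1 1, Y.eta_fin_two.trans (by rw [← congrFun (congrFun hsym 0) 1]; rfl)⟩
  exact isReducedMat_of_optimal_fin_two hdet hopt

theorem statement_12_general (a b c : ℚ_[2])
    (hnd : (!![a, b; b, c]).det ≠ 0)
    (haniso : AnisoMat !![a, b; b, c])
    (a₁ t : ℕ) (hGK : GKMat !![a, b; b, c] = ![a₁, a₁ + 2 * t])
    (hopt : OptimalMat !![a, b; b, c]) :
    (‖a‖ = (2 : ℝ) ^ (-(a₁ : ℤ)) ∧ ‖2 * b‖ = (2 : ℝ) ^ (-((a₁ + t : ℕ) : ℤ)) ∧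
      ‖c‖ = (2 : ℝ) ^ (-((a₁ + 2 * t : ℕ) : ℤ))) ∧
    ∀ Y : Matrix (Fin 2) (Fin 2) ℚ_[2], Yᵀ = Y → HalfInt Y → Y.det ≠ 0 →
      AnisoMat Y → OptimalMat Y → IsReducedMat Y :=
  ⟨norms_eq_of_GKMat_eq_even hnd haniso hGK hopt,
    fun _ hsym _ hdet _ hopt => isReducedMat_of_optimal hsym hdet hopt⟩

theorem statement_12 (a b c : ℚ_[2])
    (hX : HalfInt !![a, b; b, c]) (hnd : (!![a, b; b, c]).det ≠ 0)
    (haniso : AnisoMat !![a, b; b, c])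
    (a₁ t : ℕ) (hGK : GKMat !![a, b; b, c] = ![a₁, a₁ + 2 * t])
    (hopt : OptimalMat !![a, b; b, c]) :
    (‖a‖ = (2 : ℝ) ^ (-(a₁ : ℤ)) ∧ ‖2 * b‖ = (2 : ℝ) ^ (-((a₁ + t : ℕ) : ℤ)) ∧
      ‖c‖ = (2 : ℝ) ^ (-((a₁ + 2 * t : ℕ) : ℤ))) ∧
    ∀ Y : Matrix (Fin 2) (Fin 2) ℚ_[2], Yᵀ = Y → HalfInt Y → Y.det ≠ 0 →
      AnisoMat Y → OptimalMat Y → IsReducedMat Y :=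
  statement_12_general a b c hnd haniso a₁ t hGK hopt

end Mat2
end GKPaper
end
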